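/- arXiv:2404.03552 — 8 statements merged into one kernel-verified Lean document; each statement's English description precedes it below -/
import Mathlib

section
/- Let α, β ∈ Q. Then ε(α,β)·ε(β,α)⁻¹ = (−1)^{⟨α,β⟩}. -/
/-!
Both sides are bimultiplicative in `(α, β)`: the left one as the product of `ε` with the inverse
of its transpose, the right one because `⟨·,·⟩` is biadditive. A bimultiplicative map on
`ℤ^m` is determined by its values on pairs of basis vectors, and there the identity follows from
the definition of `ε`, using the symmetry of `⟨·,·⟩` for `i ≠ j` and its evenness for `i = j`.
-/

structure IsBimultiplicative {A G : Type*} [Add A] [Mul G] (φ : A → A → G) : Prop where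
  map_add_left : ∀ a a' b, φ (a + a') b = φ a b * φ a' b
  map_add_right : ∀ a b b', φ a (b + b') = φ a b * φ a b'

namespace IsBimultiplicative

variable {A G : Type*} [CommGroup G]

section Add

variable [Add A] {φ ψ : A → A → G}

theorem mul (hφ : IsBimultiplicative φ) (hψ : IsBimultiplicative ψ) :
    IsBimultiplicative fun a b => φ a b * ψ a b where
  map_add_left a a' b := by rw [hφ.map_add_left, hψ.map_add_left, mul_mul_mul_comm]
  map_add_right a b b' := by rw [hφ.map_add_right, hψ.map_add_right, mul_mul_mul_comm]

theorem inv (hφ : IsBimultiplicative φ) : IsBimultiplicative fun a b => (φ a b)⁻¹ where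
  map_add_left a a' b := by rw [hφ.map_add_left, mul_inv]
  map_add_right a b b' := by rw [hφ.map_add_right, mul_inv]

theorem swap (hφ : IsBimultiplicative φ) : IsBimultiplicative fun a b => φ b a :=
  ⟨fun a a' b => hφ.map_add_right b a a', fun a b b' => hφ.map_add_left b b' a⟩

theorem zpow_of_biadditive (g : G) {B : A → A → ℤ}
    (hl : ∀ a a' b, B (a + a') b = B a b + B a' b) (hr : ∀ a b b', B a (b + b') = B a b + B a b') :
    IsBimultiplicative fun a b => g ^ B a b :=
  ⟨fun a a' b => by rw [hl, zpow_add], fun a b b' => by rw [hr, zpow_add]⟩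

end Add

def toAddMonoidHom₂ [AddZeroClass A] {φ : A → A → G} (hφ : IsBimultiplicative φ) :
    A →+ A →+ Additive G :=
  AddMonoidHom.mk'
    (fun a => AddMonoidHom.mk' (fun b => Additive.ofMul (φ a b)) (hφ.map_add_right a))
    fun a a' => by ext b; exact congrArg Additive.ofMul (hφ.map_add_left a a' b)

theorem ext_single {ι : Type*} [Finite ι] [DecidableEq ι] {φ ψ : (ι → ℤ) → (ι → ℤ) → G}
    (hφ : IsBimultiplicative φ) (hψ : IsBimultiplicative ψ)
    (h : ∀ i j, φ (Pi.single i 1) (Pi.single j 1) = ψ (Pi.single i 1) (Pi.single j 1)) :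
    φ = ψ := by
  have : hφ.toAddMonoidHom₂ = hψ.toAddMonoidHom₂ := by
    ext i j
    exact congrArg Additive.ofMul (h i j)
  funext a b
  exact congrArg Additive.toMul (DFunLike.congr_fun (DFunLike.congr_fun this a) b)

end IsBimultiplicative

/-- Let α, β ∈ Q. Then ε(α,β)·ε(β,α)⁻¹ = (−1)^{⟨α,β⟩}.
Q is the free abelian group `Fin m → ℤ` with basis `Pi.single i 1`, `B` the symmetric
even ℤ-bilinear form, and `ε` the bimultiplicative map with the prescribed values on
basis elements. -/
theorem statement0 (m : ℕ) (B : (Fin m → ℤ) → (Fin m → ℤ) → ℤ)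
    (hBsymm : ∀ a b, B a b = B b a)
    (hBaddl : ∀ a a' b, B (a + a') b = B a b + B a' b)
    (hBaddr : ∀ a b b', B a (b + b') = B a b + B a b')
    (hBeven : ∀ a, ∃ n : ℤ, B a a = 2 * n)
    (ε : (Fin m → ℤ) → (Fin m → ℤ) → ℂˣ)
    (hεl : ∀ a a' b, ε (a + a') b = ε a b * ε a' b)
    (hεr : ∀ a b b', ε a (b + b') = ε a b * ε a b')
    (hεval : ∀ i j : Fin m,
      ε (Pi.single i 1) (Pi.single j 1) =
        if i ≤ j then 1 else (-1 : ℂˣ) ^ B (Pi.single i 1) (Pi.single j 1))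
    (α β : Fin m → ℤ) :
    ε α β * (ε β α)⁻¹ = (-1 : ℂˣ) ^ B α β := by
  have hε : IsBimultiplicative ε := ⟨hεl, hεr⟩
  refine congrFun₂ (hε.mul hε.swap.inv |>.ext_single
    (.zpow_of_biadditive (-1) hBaddl hBaddr) fun i j => ?_) α β
  rcases lt_trichotomy i j with h | rfl | h
  · rw [hεval, hεval, if_pos h.le, if_neg h.not_ge, hBsymm, one_mul, ← inv_zpow, inv_neg_one]
  · obtain ⟨n, hn⟩ := hBeven (Pi.single i 1)
    rw [hεval, if_pos le_rfl, hn, (even_two_mul n).neg_one_zpow, mul_inv_cancel]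
  · rw [hεval, hεval, if_neg h.not_ge, if_pos h.le, inv_one, mul_one]
end

section
/- Let W be a nonzero ℂ-vector space and for each i ∈ {1,…,m} let Z_i be an invertible ℂ-linear endomorphism of W, such that Z_i ∘ Z_j = (−1)^{⟨α_i,α_j⟩} · (Z_j ∘ Z_i) for all i, j. Then there exists a unique map e : Q → GL(W) (invertible ℂ-linear endomorphisms of W) such that e(α_i) = Z_i for all i ∈ {1,…,m} and e(α) ∘ e(β) = ε(α,β) · e(α+β) for all α, β ∈ Q. -/
/-! Writing `a = ∑ a_k α_k`, the solution is the ordered product `e(a) = Z_1^{a_1} ⋯ Z_m^{a_m}`.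
Multiplying it on the right by `Z_j` means moving `Z_j` left past the factors `Z_k^{a_k}` with
`k > j`, which costs `∏_{k > j} ε(α_k, α_j)^{a_k} = ε(a, α_j)` since `ε(α_k, α_j) = 1` for `k ≤ j`.
For bimultiplicative ε, the `b` with `e(a) e(b) = ε(a, b) e(a + b)` for all `a` form a subgroup of
`Q`, so this relation spreads from the generators to all of `Q`. Uniqueness holds because a map
satisfying it is determined by its values on the generators. -/

theorem AddSubgroup.closure_range_single_one (ι : Type*) [Finite ι] [DecidableEq ι] :
    AddSubgroup.closure (Set.range fun i : ι => (Pi.single i 1 : ι → ℤ)) = ⊤ := by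
  have hbasis : ⇑(Pi.basisFun ℤ ι) = fun i => Pi.single i 1 := funext (Pi.basisFun_apply ℤ ι)
  rw [← Submodule.span_int_eq_addSubgroupClosure, ← hbasis, (Pi.basisFun ℤ ι).span_eq,
    Submodule.top_toAddSubgroup]

theorem eq_of_mul_eq_mul_add_of_eqOn {M G : Type*} [AddGroup M] [Group G] {c : M → M → G}
    {e e' : M → G} (he : ∀ α β, e α * e β = c α β * e (α + β))
    (he' : ∀ α β, e' α * e' β = c α β * e' (α + β)) {S : Set M}
    (hS : AddSubgroup.closure S = ⊤) (hSe : Set.EqOn e e' S) : e = e' := by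
  have map_zero : ∀ f : M → G, (∀ α β, f α * f β = c α β * f (α + β)) → f 0 = c 0 0 :=
    fun f hf => mul_right_cancel (b := f 0) (by rw [hf, add_zero])
  funext α
  have hα : α ∈ AddSubgroup.closure S := hS ▸ AddSubgroup.mem_top α
  induction hα using AddSubgroup.closure_induction with
  | mem x hx => exact hSe hx
  | zero => rw [map_zero e he, map_zero e' he']
  | add x y _ _ hx hy =>
    rw [eq_inv_mul_of_mul_eq (he x y).symm, eq_inv_mul_of_mul_eq (he' x y).symm, hx, hy]
  | neg x _ hx =>
    rw [eq_inv_mul_of_mul_eq (he x (-x)), eq_inv_mul_of_mul_eq (he' x (-x)), add_neg_cancel,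
      map_zero e he, map_zero e' he', hx]

theorem eq_prod_zpow_single {ι A : Type*} [Fintype ι] [DecidableEq ι] [CommGroup A]
    {f : (ι → ℤ) → A} (hf : ∀ a b, f (a + b) = f a * f b) (α : ι → ℤ) :
    f α = ∏ i, f (Pi.single i 1) ^ α i := by
  refine congrFun (eq_of_mul_eq_mul_add_of_eqOn (c := fun _ _ => 1) (e := f)
    (e' := fun α => ∏ i, f (Pi.single i 1) ^ α i) (fun a b => by rw [hf, one_mul]) (fun a b => ?_)
    (AddSubgroup.closure_range_single_one ι) ?_) α
  · simp [zpow_add, Finset.prod_mul_distrib]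
  · rintro _ ⟨j, rfl⟩
    simp [Pi.single_apply]

section Twisted

variable {G A : Type*} [Group G] [CommGroup A] {s : A →* G} (hs : ∀ a g, Commute (s a) g)
include hs

theorem zpow_mul_eq_of_mul_eq {u g : G} {c : A} (h : u * g = s c * (g * u)) (n : ℤ) :
    u ^ n * g = s (c ^ n) * (g * u ^ n) := by
  have hgu : SemiconjBy g u (s c⁻¹ * u) := by
    rw [SemiconjBy, mul_assoc, map_inv, h, inv_mul_cancel_left]
  rw [(hgu.zpow_right n).eq, (hs _ _).mul_zpow, ← map_zpow, ← mul_assoc, ← mul_assoc, ← map_mul,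
    inv_zpow, mul_inv_cancel, map_one, one_mul]

theorem list_prod_mul_eq_of_forall_mul_eq {ι : Type*} (L : List ι) {u : ι → G} {c : ι → A}
    {g : G} (h : ∀ i ∈ L, u i * g = s (c i) * (g * u i)) :
    (L.map u).prod * g = s (L.map c).prod * (g * (L.map u).prod) := by
  induction L with
  | nil => simp
  | cons i L ih =>
    simp only [List.map_cons, List.prod_cons]
    rw [mul_assoc, ih fun k hk => h k (List.mem_cons_of_mem i hk), ← (hs _ _).left_comm,
      ← mul_assoc (u i), h i List.mem_cons_self, mul_assoc (s (c i)), ← mul_assoc (s _),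
      ← map_mul, mul_comm (L.map c).prod, mul_assoc g]

theorem list_prod_zpow_mul_eq {ι : Type*} [Preorder ι] [DecidableEq ι] {Z : ι → G}
    {c : ι → A} {j : ι} (hc : ∀ k ≤ j, c k = 1)
    (hZ : ∀ k, j < k → Z k * Z j = s (c k) * (Z j * Z k))
    (α : ι → ℤ) (L : List ι) (hL : L.Pairwise (· < ·)) (hj : j ∈ L) :
    (L.map fun k => Z k ^ α k).prod * Z j =
      s (L.map fun k => c k ^ α k).prod *
        (L.map fun k => Z k ^ (α + Pi.single j 1 : ι → ℤ) k).prod := by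
  induction L with
  | nil => simp at hj
  | cons i L ih =>
    obtain ⟨hiL, hL⟩ := List.pairwise_cons.mp hL
    simp only [List.map_cons, List.prod_cons]
    rw [Pi.add_apply]
    rcases eq_or_ne i j with rfl | hij
    · have hrest :
          (L.map fun k => Z k ^ (α + Pi.single i 1 : ι → ℤ) k) = L.map fun k => Z k ^ α k :=
        List.map_congr_left fun k hk => by
          rw [Pi.add_apply, Pi.single_eq_of_ne (hiL k hk).ne', add_zero]
      rw [mul_assoc, list_prod_mul_eq_of_forall_mul_eq hs L
          fun k hk => zpow_mul_eq_of_mul_eq hs (hZ k (hiL k hk)) (α k),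
        hrest, hc i le_rfl, one_zpow, one_mul, Pi.single_eq_same, zpow_add_one,
        ← (hs _ _).left_comm, mul_assoc]
    · have hjL : j ∈ L := (List.mem_cons.mp hj).resolve_left hij.symm
      rw [mul_assoc, ih hL hjL, hc i (hiL j hjL).le, one_zpow, one_mul,
        Pi.single_eq_of_ne hij, add_zero, (hs _ _).left_comm]

theorem mul_eq_map_mul_add_of_closure_eq_top {M : Type*} [AddCommGroup M] {ε : M → M → A}
    (hεl : ∀ a a' b, ε (a + a') b = ε a b * ε a' b)
    (hεr : ∀ a b b', ε a (b + b') = ε a b * ε a b') {e : M → G} (he0 : e 0 = 1) {S : Set M}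
    (hS : AddSubgroup.closure S = ⊤) (hSe : ∀ α, ∀ x ∈ S, e α * e x = s (ε α x) * e (α + x))
    (α β : M) : e α * e β = s (ε α β) * e (α + β) := by
  have hε0 : ∀ a, ε a 0 = 1 := fun a =>
    left_eq_mul.mp (by rw [← hεr, add_zero] : ε a 0 = ε a 0 * ε a 0)
  have hβ : β ∈ AddSubgroup.closure S := hS ▸ AddSubgroup.mem_top β
  induction hβ using AddSubgroup.closure_induction generalizing α with
  | mem x hx => exact hSe α x hx
  | zero => rw [he0, hε0, map_one, add_zero, mul_one, one_mul]
  | add x y _ _ hx hy =>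
    have key : ε x y * ε α (x + y) = ε α x * ε (α + x) y := by
      rw [hεr, hεl]; ac_rfl
    apply mul_left_cancel (a := s (ε x y))
    calc s (ε x y) * (e α * e (x + y)) = e α * e x * e y := by
          rw [(hs _ _).left_comm, ← hy x, mul_assoc]
      _ = s (ε α x) * (e (α + x) * e y) := by rw [hx α, mul_assoc]
      _ = s (ε x y) * (s (ε α (x + y)) * e (α + (x + y))) := by
          rw [hy (α + x), ← mul_assoc, ← map_mul, ← key, map_mul, mul_assoc, add_assoc]
  | neg x _ hx =>
    have key : ε (-x) x = ε α (-x) * ε (α + -x) x := by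
      rw [hεl, ← mul_assoc, ← hεr, neg_add_cancel, hε0, one_mul]
    apply mul_right_cancel (b := e x)
    calc e α * e (-x) * e x = s (ε (-x) x) * e α := by
          rw [mul_assoc, hx, neg_add_cancel, he0, mul_one, (hs _ _).eq]
      _ = s (ε α (-x)) * e (α + -x) * e x := by
          rw [mul_assoc, hx, neg_add_cancel_right, ← mul_assoc, ← map_mul, ← key]

theorem existsUnique_mul_eq_map_mul_add {m : ℕ} {ε : (Fin m → ℤ) → (Fin m → ℤ) → A}
    (hεl : ∀ a a' b, ε (a + a') b = ε a b * ε a' b)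
    (hεr : ∀ a b b', ε a (b + b') = ε a b * ε a b')
    (hεle : ∀ i j : Fin m, i ≤ j → ε (Pi.single i 1) (Pi.single j 1) = 1) {Z : Fin m → G}
    (hZ : ∀ j k : Fin m, j < k →
      Z k * Z j = s (ε (Pi.single k 1) (Pi.single j 1)) * (Z j * Z k)) :
    ∃! e : (Fin m → ℤ) → G,
      (∀ i, e (Pi.single i 1) = Z i) ∧ ∀ α β, e α * e β = s (ε α β) * e (α + β) := by
  set e : (Fin m → ℤ) → G := fun α => ((List.finRange m).map fun k => Z k ^ α k).prod
  have he0 : e 0 = 1 := by simp [e]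
  have hmul_single : ∀ α j, e α * Z j = s (ε α (Pi.single j 1)) * e (α + Pi.single j 1) := by
    intro α j
    rw [eq_prod_zpow_single (f := (ε · (Pi.single j 1))) (fun a a' => hεl a a' _) α,
      Fin.prod_univ_def]
    exact list_prod_zpow_mul_eq hs (hεle · j) (hZ j) α _ (List.pairwise_lt_finRange m)
      (List.mem_finRange j)
  have he_single : ∀ i, e (Pi.single i 1) = Z i := fun i => by
    have hε0 : ε 0 (Pi.single i 1) = 1 :=
      left_eq_mul.mp (by rw [← hεl, add_zero] : ε 0 (Pi.single i 1) = _)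
    simpa [he0, hε0] using (hmul_single 0 i).symm
  have hS := AddSubgroup.closure_range_single_one (Fin m)
  have he := mul_eq_map_mul_add_of_closure_eq_top hs hεl hεr he0 hS
    (by rintro α _ ⟨j, rfl⟩; rw [he_single]; exact hmul_single α j)
  refine ⟨e, ⟨he_single, he⟩,
    fun e' ⟨he'_single, he'⟩ => eq_of_mul_eq_mul_add_of_eqOn he' he hS ?_⟩
  rintro _ ⟨i, rfl⟩
  rw [he'_single, he_single]

end Twisted

theorem Units.mul_eq_map_algebraMap_mul_iff {R A : Type*} [CommSemiring R] [Semiring A]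
    [Algebra R A] {u v w : Aˣ} {c : Rˣ} :
    u * v = Units.map (algebraMap R A : R →* A) c * w ↔ (u : A) * v = (c : R) • (w : A) := by
  rw [Units.ext_iff, Algebra.smul_def]
  rfl

theorem statement1_general (m : ℕ) (B : (Fin m → ℤ) → (Fin m → ℤ) → ℤ)
    (ε : (Fin m → ℤ) → (Fin m → ℤ) → ℂˣ)
    (hεl : ∀ a a' b, ε (a + a') b = ε a b * ε a' b)
    (hεr : ∀ a b b', ε a (b + b') = ε a b * ε a b')
    (hεval : ∀ i j : Fin m,
      ε (Pi.single i 1) (Pi.single j 1) =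
        if i ≤ j then 1 else (-1 : ℂˣ) ^ B (Pi.single i 1) (Pi.single j 1))
    (W : Type*) [AddCommGroup W] [Module ℂ W]
    (Z : Fin m → (Module.End ℂ W)ˣ)
    (hZ : ∀ i j : Fin m, (Z i : Module.End ℂ W) * (Z j : Module.End ℂ W) =
      ((-1 : ℂ) ^ B (Pi.single i 1) (Pi.single j 1)) •
        ((Z j : Module.End ℂ W) * (Z i : Module.End ℂ W))) :
    ∃! e : (Fin m → ℤ) → (Module.End ℂ W)ˣ,
      (∀ i : Fin m, e (Pi.single i 1) = Z i) ∧
      (∀ α β : Fin m → ℤ, (e α : Module.End ℂ W) * (e β : Module.End ℂ W) =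
        (ε α β : ℂ) • (e (α + β) : Module.End ℂ W)) := by
  let s : ℂˣ →* (Module.End ℂ W)ˣ := Units.map (algebraMap ℂ (Module.End ℂ W) : ℂ →* _)
  have hs : ∀ c g, Commute (s c) g := fun c g => Units.ext (Algebra.commutes _ _)
  have hZε : ∀ j k : Fin m, j < k →
      Z k * Z j = s (ε (Pi.single k 1) (Pi.single j 1)) * (Z j * Z k) := fun j k hjk => by
    rw [Units.mul_eq_map_algebraMap_mul_iff, hεval, if_neg hjk.not_ge]
    push_cast
    exact hZ k j
  simpa only [s, Units.mul_eq_map_algebraMap_mul_iff] using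
    existsUnique_mul_eq_map_mul_add hs hεl hεr (fun i j hij => by rw [hεval, if_pos hij]) hZε

/-- Given a nonzero ℂ-vector space `W` and invertible endomorphisms
`Z i` with `Z i ∘ Z j = (−1)^{⟨α_i,α_j⟩} Z j ∘ Z i`, there is a unique map
`e : Q → GL(W)` with `e (α_i) = Z i` and `e α ∘ e β = ε(α,β) • e (α+β)`. -/
theorem statement1 (m : ℕ) (B : (Fin m → ℤ) → (Fin m → ℤ) → ℤ)
    (hBsymm : ∀ a b, B a b = B b a)
    (hBaddl : ∀ a a' b, B (a + a') b = B a b + B a' b)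
    (hBaddr : ∀ a b b', B a (b + b') = B a b + B a b')
    (hBeven : ∀ a, ∃ n : ℤ, B a a = 2 * n)
    (ε : (Fin m → ℤ) → (Fin m → ℤ) → ℂˣ)
    (hεl : ∀ a a' b, ε (a + a') b = ε a b * ε a' b)
    (hεr : ∀ a b b', ε a (b + b') = ε a b * ε a b')
    (hεval : ∀ i j : Fin m,
      ε (Pi.single i 1) (Pi.single j 1) =
        if i ≤ j then 1 else (-1 : ℂˣ) ^ B (Pi.single i 1) (Pi.single j 1))
    (W : Type*) [AddCommGroup W] [Module ℂ W] [Nontrivial W]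
    (Z : Fin m → (Module.End ℂ W)ˣ)
    (hZ : ∀ i j : Fin m, (Z i : Module.End ℂ W) * (Z j : Module.End ℂ W) =
      ((-1 : ℂ) ^ B (Pi.single i 1) (Pi.single j 1)) •
        ((Z j : Module.End ℂ W) * (Z i : Module.End ℂ W))) :
    ∃! e : (Fin m → ℤ) → (Module.End ℂ W)ˣ,
      (∀ i : Fin m, e (Pi.single i 1) = Z i) ∧
      (∀ α β : Fin m → ℤ, (e α : Module.End ℂ W) * (e β : Module.End ℂ W) =
        (ε α β : ℂ) • (e (α + β) : Module.End ℂ W)) :=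
  statement1_general m B ε hεl hεr hεval W Z hZ
end

section
/- Let C = (c_{ij})_{i,j∈ℕ} be a lower unitriangular matrix with entries in ℂ[[ℏ]] satisfying conditions (C1) and (C2), and let D = (d_{ij}) be its (lower unitriangular) inverse, i.e. Σ_k c_{ik} d_{kj} = δ_{ij} = Σ_k d_{ik} c_{kj} for all i, j. Then D also satisfies conditions (C1) and (C2). -/
/-!
Since `c` has unit diagonal, `C D = 1` is solved by forward substitution:
`d i j = -∑_{j ≤ k < i} c i k * d k j` for `j < i`. Every term carries an off-diagonal entry of `c`,
hence a factor `ℏ`, which gives (C1). For (C2) induct on `N`: in the term indexed by `k`, either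
`c i k` lies far below the diagonal and is divisible by `ℏ ^ (N + 1)`, or `d k j` does and is
divisible by `ℏ ^ N`, while `c i k` still contributes one more `ℏ`.
-/

open Finset

section ForwardSubstitution

variable {R : Type*} [CommRing R] {c d : ℕ → ℕ → R}

theorem eq_neg_sum_Ico_mul_of_sum_Icc_mul_eq_zero {i j : ℕ} (hji : j ≤ i) (hc : c i i = 1)
    (h : ∑ k ∈ Icc j i, c i k * d k j = 0) : d i j = -∑ k ∈ Ico j i, c i k * d k j := by
  rw [← Ico_insert_right hji, sum_insert right_notMem_Ico, hc, one_mul] at h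
  exact eq_neg_of_add_eq_zero_left h

variable {x : R}

theorem dvd_of_forward_subst (hrec : ∀ i j, j < i → d i j = -∑ k ∈ Ico j i, c i k * d k j)
    (hc : ∀ i j, j < i → x ∣ c i j) :
    ∀ i j, j < i → x ∣ d i j := by
  intro i j hji
  rw [hrec i j hji, dvd_neg]
  exact dvd_sum fun k hk => (hc i k (mem_Ico.mp hk).2).mul_right _

theorem pow_dvd_of_forward_subst
    (hrec : ∀ i j, j < i → d i j = -∑ k ∈ Ico j i, c i k * d k j)
    (hc : ∀ i j, j < i → x ∣ c i j)
    (hc_band : ∀ N : ℕ, ∃ K : ℕ, ∀ i j, j + K < i → x ^ N ∣ c i j) :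
    ∀ N : ℕ, ∃ K : ℕ, ∀ i j, j + K < i → x ^ N ∣ d i j := by
  intro N
  induction N with
  | zero => exact ⟨0, fun _ _ _ => by rw [pow_zero]; exact one_dvd _⟩
  | succ N ih =>
    obtain ⟨Kd, hKd⟩ := ih
    obtain ⟨Kc, hKc⟩ := hc_band (N + 1)
    refine ⟨Kc + Kd, fun i j hij => ?_⟩
    rw [hrec i j (by omega), dvd_neg]
    refine dvd_sum fun k hk => ?_
    obtain ⟨hjk, hki⟩ := mem_Ico.mp hk
    by_cases hfar : k + Kc < i
    · exact (hKc i k hfar).mul_right _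
    · rw [pow_succ']
      exact mul_dvd_mul (hc i k hki) (hKd k j (by omega))

end ForwardSubstitution

theorem statement3_general (c d : ℕ → ℕ → PowerSeries ℂ)
    (hc_diag : ∀ i, c i i = 1)
    (hinv1 : ∀ i j, ∑ k ∈ Finset.Icc j i, c i k * d k j = if i = j then 1 else 0)
    (hC1 : ∀ i j, j < i → PowerSeries.X ∣ c i j)
    (hC2 : ∀ N : ℕ, ∃ k : ℕ, ∀ i j, j + k < i → PowerSeries.X ^ N ∣ c i j) :
    (∀ i j, j < i → PowerSeries.X ∣ d i j) ∧
    (∀ N : ℕ, ∃ k : ℕ, ∀ i j, j + k < i → PowerSeries.X ^ N ∣ d i j) := by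
  have hrec : ∀ i j, j < i → d i j = -∑ k ∈ Ico j i, c i k * d k j := fun i j hji =>
    eq_neg_sum_Ico_mul_of_sum_Icc_mul_eq_zero hji.le (hc_diag i)
      ((hinv1 i j).trans (if_neg hji.ne'))
  exact ⟨dvd_of_forward_subst hrec hC1, pow_dvd_of_forward_subst hrec hC1 hC2⟩

/-- If a lower unitriangular matrix `c` over ℂ[[ℏ]] satisfies (C1) and
(C2), then so does its lower unitriangular inverse `d`. -/
theorem statement3 (c d : ℕ → ℕ → PowerSeries ℂ)
    (hc_diag : ∀ i, c i i = 1) (hc_tri : ∀ i j, i < j → c i j = 0)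
    (hd_diag : ∀ i, d i i = 1) (hd_tri : ∀ i j, i < j → d i j = 0)
    (hinv1 : ∀ i j, ∑ k ∈ Finset.Icc j i, c i k * d k j = if i = j then 1 else 0)
    (hinv2 : ∀ i j, ∑ k ∈ Finset.Icc j i, d i k * c k j = if i = j then 1 else 0)
    (hC1 : ∀ i j, j < i → PowerSeries.X ∣ c i j)
    (hC2 : ∀ N : ℕ, ∃ k : ℕ, ∀ i j, j + k < i → PowerSeries.X ^ N ∣ c i j) :
    (∀ i j, j < i → PowerSeries.X ∣ d i j) ∧
    (∀ N : ℕ, ∃ k : ℕ, ∀ i j, j + k < i → PowerSeries.X ^ N ∣ d i j) :=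
  statement3_general c d hc_diag hinv1 hC1 hC2
end

section
/- Let C = (c_{ij})_{i,j∈ℕ} be a lower unitriangular matrix with entries in ℂ[[ℏ]] satisfying conditions (C1) and (C2), let V be a module over ℂ[[ℏ]], and let x, y : ℕ → V be sequences with Σ_{j≤i} c_{ij} • x_j = y_i for all i ∈ ℕ. If for every N ∈ ℕ there exists k ∈ ℕ such that y_i ∈ ℏ^N V for all i ≥ k, then for every N ∈ ℕ there exists k ∈ ℕ such that x_i ∈ ℏ^N V for all i ≥ k. -/
/-!
Isolate the diagonal term: `x i = y i - ∑_{j < i} c i j • x j`. Induct on `N`. Once the `x j`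
with `j ≥ k` lie in `ℏ^N V`, every term of the sum lies in `ℏ^(N+1) V` as soon as `i` is large:
for `j ≥ k` because `ℏ ∣ c i j` by (C1), and for `j < k` because `j` is then far below `i`, so
`ℏ^(N+1) ∣ c i j` by (C2).
-/

open Pointwise

section

variable {R V : Type*} [CommRing R] [AddCommGroup V] [Module R V]

theorem mem_smul_top_iff_exists_eq_smul (r : R) (w : V) :
    w ∈ r • (⊤ : Submodule R V) ↔ ∃ v : V, w = r • v := by
  simp [Submodule.mem_smul_pointwise_iff_exists, eq_comm]

theorem smul_mem_pow_smul_top_of_dvd {t a : R} {w : V} {m n : ℕ} (ha : t ^ m ∣ a)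
    (hw : w ∈ t ^ n • (⊤ : Submodule R V)) : a • w ∈ t ^ (n + m) • (⊤ : Submodule R V) := by
  obtain ⟨d, rfl⟩ := ha
  obtain ⟨v, rfl⟩ := (mem_smul_top_iff_exists_eq_smul _ _).1 hw
  exact (mem_smul_top_iff_exists_eq_smul _ _).2 ⟨d • v, by rw [smul_smul, smul_smul]; ring_nf⟩

theorem eq_sub_sum_Iio_of_sum_Iic_eq {c : ℕ → ℕ → R} {x : ℕ → V} {y : V} {i : ℕ}
    (hdiag : c i i = 1) (h : ∑ j ∈ Finset.Iic i, c i j • x j = y) :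
    x i = y - ∑ j ∈ Finset.Iio i, c i j • x j := by
  rw [← Finset.Iio_insert, Finset.sum_insert Finset.notMem_Iio_self, hdiag, one_smul] at h
  exact eq_sub_of_add_eq h

theorem sum_Iio_mem_pow_succ_smul_top {t : R} {c : ℕ → ℕ → R} {x : ℕ → V} {N k₁ k₂ i : ℕ}
    (hC1 : ∀ j, j < i → t ∣ c i j) (hC2 : ∀ j, j + k₂ < i → t ^ (N + 1) ∣ c i j)
    (hx : ∀ j, k₁ ≤ j → x j ∈ t ^ N • (⊤ : Submodule R V)) (hi : k₁ + k₂ < i) :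
    ∑ j ∈ Finset.Iio i, c i j • x j ∈ t ^ (N + 1) • (⊤ : Submodule R V) := by
  refine Submodule.sum_mem _ fun j hj => ?_
  rw [Finset.mem_Iio] at hj
  rcases lt_or_ge j k₁ with hjk | hjk
  · simpa using smul_mem_pow_smul_top_of_dvd (n := 0) (w := x j)
      (hC2 j (by omega)) (by simp)
  · simpa using smul_mem_pow_smul_top_of_dvd (m := 1) (by rw [pow_one]; exact hC1 j hj) (hx j hjk)

theorem eventually_mem_pow_smul_top_of_unitriangular (t : R) (c : ℕ → ℕ → R)
    (hdiag : ∀ i, c i i = 1) (hC1 : ∀ i j, j < i → t ∣ c i j)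
    (hC2 : ∀ N : ℕ, ∃ k : ℕ, ∀ i j, j + k < i → t ^ N ∣ c i j) (x y : ℕ → V)
    (hxy : ∀ i, ∑ j ∈ Finset.Iic i, c i j • x j = y i)
    (hy : ∀ N : ℕ, ∃ k : ℕ, ∀ i, k ≤ i → y i ∈ t ^ N • (⊤ : Submodule R V)) (N : ℕ) :
    ∃ k : ℕ, ∀ i, k ≤ i → x i ∈ t ^ N • (⊤ : Submodule R V) := by
  induction N with
  | zero => exact ⟨0, fun i _ => by simp⟩
  | succ N ih =>
    obtain ⟨kx, hkx⟩ := ih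
    obtain ⟨ky, hky⟩ := hy (N + 1)
    obtain ⟨kc, hkc⟩ := hC2 (N + 1)
    refine ⟨max ky (kx + kc + 1), fun i hi => ?_⟩
    rw [eq_sub_sum_Iio_of_sum_Iic_eq (hdiag i) (hxy i)]
    exact Submodule.sub_mem _ (hky i (le_of_max_le_left hi))
      (sum_Iio_mem_pow_succ_smul_top (hC1 i) (hkc i) hkx (by omega))

end

theorem statement5_general (c : ℕ → ℕ → PowerSeries ℂ)
    (hdiag : ∀ i, c i i = 1)
    (hC1 : ∀ i j, j < i → PowerSeries.X ∣ c i j)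
    (hC2 : ∀ N : ℕ, ∃ k : ℕ, ∀ i j, j + k < i → PowerSeries.X ^ N ∣ c i j)
    (V : Type*) [AddCommGroup V] [Module (PowerSeries ℂ) V]
    (x y : ℕ → V)
    (hxy : ∀ i, ∑ j ∈ Finset.Iic i, c i j • x j = y i)
    (hy : ∀ N : ℕ, ∃ k : ℕ, ∀ i, k ≤ i → ∃ v : V, y i = (PowerSeries.X ^ N : PowerSeries ℂ) • v) :
    ∀ N : ℕ, ∃ k : ℕ, ∀ i, k ≤ i → ∃ v : V, x i = (PowerSeries.X ^ N : PowerSeries ℂ) • v := by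
  simp only [← mem_smul_top_iff_exists_eq_smul] at hy ⊢
  exact eventually_mem_pow_smul_top_of_unitriangular _ c hdiag hC1 hC2 x y hxy hy

/-- If `c` is lower unitriangular over ℂ[[ℏ]] satisfying (C1), (C2),
`Σ_{j≤i} c i j • x j = y i`, and the `y i` eventually lie in `ℏ^N V` for each `N`,
then so do the `x i`. -/
theorem statement5 (c : ℕ → ℕ → PowerSeries ℂ)
    (hdiag : ∀ i, c i i = 1) (htri : ∀ i j, i < j → c i j = 0)
    (hC1 : ∀ i j, j < i → PowerSeries.X ∣ c i j)
    (hC2 : ∀ N : ℕ, ∃ k : ℕ, ∀ i j, j + k < i → PowerSeries.X ^ N ∣ c i j)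
    (V : Type*) [AddCommGroup V] [Module (PowerSeries ℂ) V]
    (x y : ℕ → V)
    (hxy : ∀ i, ∑ j ∈ Finset.Iic i, c i j • x j = y i)
    (hy : ∀ N : ℕ, ∃ k : ℕ, ∀ i, k ≤ i → ∃ v : V, y i = (PowerSeries.X ^ N : PowerSeries ℂ) • v) :
    ∀ N : ℕ, ∃ k : ℕ, ∀ i, k ≤ i → ∃ v : V, x i = (PowerSeries.X ^ N : PowerSeries ℂ) • v :=
  statement5_general c hdiag hC1 hC2 V x y hxy hy
end

section
/- Let W₀ be a nonzero ℂ-vector space, W = W₀[[ℏ]], and let S be a set of ℂ[[ℏ]]-linear endomorphisms of W. Each s ∈ S maps ℏW into ℏW and hence induces a ℂ-linear endomorphism of W/ℏW. Assume that the only ℂ-subspaces of W/ℏW invariant under all the induced endomorphisms (for s ∈ S) are 0 and W/ℏW. Then every nonzero ℂ[[ℏ]]-submodule N of W that is invariant under all s ∈ S, ℏ-saturated, and ℏ-adically closed is equal to W. -/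
/-!
Put `P = N + ℏW`. It contains `ℏW` and is stable under `S`, so irreducibility of `W/ℏW` leaves
two cases. If `P = ℏW`, then `N ⊆ ℏW`, and saturation upgrades this to `N ⊆ ℏN`, hence
`N ⊆ ℏᵏW` for all `k`; since `ℏᵏW` consists of series with vanishing coefficients below `k`,
`N = 0`. If `P = W`, iterating `W = N + ℏW` gives `W = N + ℏᵏW` for all `k`, so every element
of `W` lies in the ℏ-adic closure of `N`, which is `N`.
-/

open scoped Pointwise

namespace Submodule

variable {R M : Type*} [CommRing R] [AddCommGroup M] [Module R M] {x : R} {N : Submodule R M}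

theorem sup_smul_top_le_comap {f : M →ₗ[R] M} (hf : N ≤ N.comap f) :
    N ⊔ x • ⊤ ≤ (N ⊔ x • ⊤).comap f := by
  intro w hw
  obtain ⟨n, hn, z, hz, rfl⟩ := mem_sup.1 hw
  obtain ⟨u, -, rfl⟩ := (mem_smul_pointwise_iff_exists _ _ _).1 hz
  rw [mem_comap, map_add, map_smul]
  exact add_mem (mem_sup_left (hf hn)) (mem_sup_right (smul_mem_pointwise_smul _ _ _ trivial))

theorem sup_pow_smul_top_eq_top (h : N ⊔ x • ⊤ = ⊤) (k : ℕ) : N ⊔ x ^ k • ⊤ = ⊤ := by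
  induction k with
  | zero => rw [pow_zero, one_smul, sup_top_eq]
  | succ k ih =>
    refine eq_top_iff.2 (ih.symm.le.trans (sup_le le_sup_left ?_))
    calc x ^ k • (⊤ : Submodule R M) = x ^ k • (N ⊔ x • ⊤) := by rw [h]
      _ = x ^ k • N ⊔ x ^ (k + 1) • ⊤ := by rw [smul_sup', smul_smul, pow_succ]
      _ ≤ N ⊔ x ^ (k + 1) • ⊤ := sup_le_sup_right (smul_le_self_of_tower _ _) _

theorem le_smul_of_forall_smul_mem (hsat : ∀ w, x • w ∈ N → w ∈ N) (h : N ≤ x • ⊤) :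
    N ≤ x • N := by
  intro m hm
  obtain ⟨u, -, rfl⟩ := (mem_smul_pointwise_iff_exists _ _ _).1 (h hm)
  exact smul_mem_pointwise_smul _ _ _ (hsat u hm)

theorem le_pow_smul_top_of_forall_smul_mem (hsat : ∀ w, x • w ∈ N → w ∈ N) (h : N ≤ x • ⊤)
    (k : ℕ) : N ≤ x ^ k • ⊤ := by
  suffices N ≤ x ^ k • N from this.trans (smul_mono_right _ le_top)
  induction k with
  | zero => rw [pow_zero, one_smul]
  | succ k ih =>
    calc N ≤ x ^ k • N := ih
      _ ≤ x ^ k • x • N := smul_mono_right _ (le_smul_of_forall_smul_mem hsat h)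
      _ = x ^ (k + 1) • N := by rw [smul_smul, pow_succ]

end Submodule

section PowerSeriesModule

variable {R W₀ W : Type*} [CommRing R] [AddCommGroup W₀] [Module R W₀]
  [AddCommGroup W] [Module (PowerSeries R) W] (e : W ≃+ (ℕ → W₀))
  (hsmul : ∀ (f : PowerSeries R) (w : W) (n : ℕ),
    e (f • w) n = ∑ k ∈ Finset.range (n + 1), PowerSeries.coeff k f • e w (n - k))
include hsmul

theorem apply_X_pow_smul_of_lt {k n : ℕ} (hn : n < k) (u : W) :
    e ((PowerSeries.X ^ k : PowerSeries R) • u) n = 0 := by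
  rw [hsmul]
  refine Finset.sum_eq_zero fun j hj => ?_
  rw [PowerSeries.coeff_X_pow, if_neg (by grind), zero_smul]

theorem eq_zero_of_forall_mem_X_pow_smul_top {m : W}
    (h : ∀ k : ℕ, m ∈ (PowerSeries.X ^ k : PowerSeries R) • (⊤ : Submodule (PowerSeries R) W)) :
    m = 0 := by
  refine e.injective (funext fun n => ?_)
  obtain ⟨u, -, rfl⟩ := (Submodule.mem_smul_pointwise_iff_exists _ _ _).1 (h (n + 1))
  rw [map_zero, Pi.zero_apply, apply_X_pow_smul_of_lt e hsmul n.lt_succ_self]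

end PowerSeriesModule

theorem statement8_general (W₀ : Type*) [AddCommGroup W₀] [Module ℂ W₀]
    (W : Type*) [AddCommGroup W] [Module (PowerSeries ℂ) W]
    (e : W ≃+ (ℕ → W₀))
    (hsmul : ∀ (f : PowerSeries ℂ) (w : W) (n : ℕ),
      e (f • w) n = ∑ k ∈ Finset.range (n + 1), PowerSeries.coeff (R := ℂ) k f • e w (n - k))
    (S : Set (Module.End (PowerSeries ℂ) W))
    (hirr : ∀ P : Set W,
      (∀ u : W, (PowerSeries.X : PowerSeries ℂ) • u ∈ P) →
      (∀ x ∈ P, ∀ y ∈ P, x + y ∈ P) →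
      (∀ (c : ℂ), ∀ x ∈ P, PowerSeries.C (R := ℂ) c • x ∈ P) →
      (∀ s ∈ S, ∀ x ∈ P, s x ∈ P) →
      (P = {w : W | ∃ u : W, w = (PowerSeries.X : PowerSeries ℂ) • u} ∨ P = Set.univ))
    (N : Submodule (PowerSeries ℂ) W) (hN0 : N ≠ ⊥)
    (hNS : ∀ s ∈ S, ∀ w ∈ N, s w ∈ N)
    (hsat : ∀ w : W, (PowerSeries.X : PowerSeries ℂ) • w ∈ N → w ∈ N)
    (hclosed : ∀ w : W,
      (∀ k : ℕ, ∃ n ∈ N, ∃ u : W, w - n = (PowerSeries.X ^ k : PowerSeries ℂ) • u) → w ∈ N) :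
    N = ⊤ := by
  set P := N ⊔ (PowerSeries.X : PowerSeries ℂ) • (⊤ : Submodule (PowerSeries ℂ) W)
  rcases hirr P
      (fun _ => Submodule.mem_sup_right (Submodule.smul_mem_pointwise_smul _ _ _ trivial))
      (fun _ hx _ hy => P.add_mem hx hy) (fun _ _ hx => P.smul_mem _ hx)
      (fun s hs => Submodule.sup_smul_top_le_comap fun w => hNS s hs w) with hP | hP
  · have hNX : N ≤ (PowerSeries.X : PowerSeries ℂ) • ⊤ := by
      intro m hm
      have hmP : m ∈ (P : Set W) := Submodule.mem_sup_left hm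
      obtain ⟨u, rfl⟩ := hP ▸ hmP
      exact Submodule.smul_mem_pointwise_smul _ _ _ trivial
    refine absurd (eq_bot_iff.2 fun m hm => (Submodule.mem_bot _).2 ?_) hN0
    exact eq_zero_of_forall_mem_X_pow_smul_top e hsmul
      fun k => Submodule.le_pow_smul_top_of_forall_smul_mem hsat hNX k hm
  · have hPtop : P = ⊤ := Submodule.coe_eq_univ.1 hP
    refine eq_top_iff.2 fun w _ => hclosed w fun k => ?_
    have hw : w ∈ N ⊔ (PowerSeries.X ^ k : PowerSeries ℂ) • ⊤ := by
      rw [Submodule.sup_pow_smul_top_eq_top hPtop k]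
      exact Submodule.mem_top
    obtain ⟨n, hn, z, hz, rfl⟩ := Submodule.mem_sup.1 hw
    obtain ⟨u, -, rfl⟩ := (Submodule.mem_smul_pointwise_iff_exists _ _ _).1 hz
    exact ⟨n, hn, u, add_sub_cancel_left _ _⟩

/-- Let `W = W₀[[ℏ]]` with `W₀` nonzero, and `S` a set of ℂ[[ℏ]]-linear
endomorphisms of `W`. Assume the only ℂ-subspaces of `W/ℏW` invariant under all the
induced endomorphisms are `0` and `W/ℏW` (encoded: every subset `P` of `W` containing
`ℏW`, closed under addition, the ℂ-action and all `s ∈ S`, equals `ℏW` or `W`).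
Then every nonzero `S`-invariant, ℏ-saturated, ℏ-adically closed ℂ[[ℏ]]-submodule
of `W` equals `W`. -/
theorem statement8 (W₀ : Type*) [AddCommGroup W₀] [Module ℂ W₀] [Nontrivial W₀]
    (W : Type*) [AddCommGroup W] [Module (PowerSeries ℂ) W]
    (e : W ≃+ (ℕ → W₀))
    (hsmul : ∀ (f : PowerSeries ℂ) (w : W) (n : ℕ),
      e (f • w) n = ∑ k ∈ Finset.range (n + 1), PowerSeries.coeff (R := ℂ) k f • e w (n - k))
    (S : Set (Module.End (PowerSeries ℂ) W))
    (hirr : ∀ P : Set W,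
      (∀ u : W, (PowerSeries.X : PowerSeries ℂ) • u ∈ P) →
      (∀ x ∈ P, ∀ y ∈ P, x + y ∈ P) →
      (∀ (c : ℂ), ∀ x ∈ P, PowerSeries.C (R := ℂ) c • x ∈ P) →
      (∀ s ∈ S, ∀ x ∈ P, s x ∈ P) →
      (P = {w : W | ∃ u : W, w = (PowerSeries.X : PowerSeries ℂ) • u} ∨ P = Set.univ))
    (N : Submodule (PowerSeries ℂ) W) (hN0 : N ≠ ⊥)
    (hNS : ∀ s ∈ S, ∀ w ∈ N, s w ∈ N)
    (hsat : ∀ w : W, (PowerSeries.X : PowerSeries ℂ) • w ∈ N → w ∈ N)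
    (hclosed : ∀ w : W,
      (∀ k : ℕ, ∃ n ∈ N, ∃ u : W, w - n = (PowerSeries.X ^ k : PowerSeries ℂ) • u) → w ∈ N) :
    N = ⊤ :=
  statement8_general W₀ W e hsmul S hirr N hN0 hNS hsat hclosed
end

section
/- Let W₀ be a ℂ-vector space, W = W₀[[ℏ]], and let N be a ℂ[[ℏ]]-submodule of W that is ℏ-saturated and ℏ-adically closed. Let N₀ be any ℂ-subspace of N such that N = N₀ ⊕ ℏN as ℂ-vector spaces. Then the map sending a sequence (xₙ)_{n∈ℕ} of elements of N₀ to the element Σₙ ℏⁿxₙ of W is injective, and its image is exactly N. -/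
/-!
Write `w ∈ N` as `x₀ + ℏ w₁` with `x₀ ∈ N₀` and `w₁ ∈ N`, and iterate on `w₁`: this gives a
sequence `(xₙ)` in `N₀` with `w ≡ Σ_{n<k} ℏⁿxₙ` modulo `ℏᵏ` for every `k`, so `w = Σ ℏⁿxₙ`
because `W₀[[ℏ]]` is ℏ-adically separated. Conversely the partial sums of `Σ ℏⁿxₙ` lie in `N`
and approximate it ℏ-adically, so `Σ ℏⁿxₙ ∈ N` by closedness. If `Σ ℏⁿxₙ = 0`, then
`x₀ = -ℏ Σ ℏⁿxₙ₊₁ ∈ N₀ ∩ ℏN = 0`; as `ℏ` acts injectively, the tail `Σ ℏⁿxₙ₊₁` vanishes as well,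
and induction gives injectivity.
-/

open PowerSeries

namespace PowerSeriesModule

variable {R W₀ W : Type*} [Ring R] [AddCommGroup W₀] [Module R W₀] [AddCommGroup W]
  [Module R⟦X⟧ W]

variable (R) in
/-- `e` identifies the `R⟦X⟧`-module `W` with `W₀⟦X⟧`, the action being the Cauchy product. -/
def IsCoeffEquiv (e : W ≃+ (ℕ → W₀)) : Prop :=
  ∀ (f : R⟦X⟧) (w : W) (n : ℕ),
    e (f • w) n = ∑ k ∈ Finset.range (n + 1), coeff (R := R) k f • e w (n - k)

def IsXAdicallyClosed (N : Submodule R⟦X⟧ W) : Prop :=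
  ∀ w : W, (∀ k : ℕ, ∃ n ∈ N, ∃ u : W, w - n = (X ^ k : R⟦X⟧) • u) → w ∈ N

def sumXPowSMul (e : W ≃+ (ℕ → W₀)) (x : ℕ → W) : W :=
  e.symm fun m => ∑ n ∈ Finset.range (m + 1), e (x n) (m - n)

variable {e : W ≃+ (ℕ → W₀)}

@[simp]
theorem sumXPowSMul_apply (x : ℕ → W) (m : ℕ) :
    e (sumXPowSMul e x) m = ∑ n ∈ Finset.range (m + 1), e (x n) (m - n) := by
  simp [sumXPowSMul]

theorem sumXPowSMul_sub (x y : ℕ → W) :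
    sumXPowSMul e (x - y) = sumXPowSMul e x - sumXPowSMul e y :=
  e.injective <| funext fun m => by simp [Finset.sum_sub_distrib]

theorem IsCoeffEquiv.X_pow_smul_apply (he : IsCoeffEquiv R e) (k : ℕ) (w : W) (m : ℕ) :
    e ((X : R⟦X⟧) ^ k • w) m = if k ≤ m then e w (m - k) else 0 := by
  simp [he _ w m, coeff_X_pow, ite_smul]

theorem IsCoeffEquiv.X_smul_injective (he : IsCoeffEquiv R e) :
    Function.Injective fun w : W => (X : R⟦X⟧) • w := by
  intro v w hvw
  refine e.injective <| funext fun m => ?_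
  have hm := congrFun (congrArg e hvw) (m + 1)
  rwa [← pow_one (X : R⟦X⟧), he.X_pow_smul_apply, he.X_pow_smul_apply, if_pos (by omega),
    if_pos (by omega), Nat.add_sub_cancel] at hm

theorem IsCoeffEquiv.eq_zero_of_forall_eq_X_pow_smul (he : IsCoeffEquiv R e) {w : W}
    (h : ∀ k : ℕ, ∃ u : W, w = (X : R⟦X⟧) ^ k • u) : w = 0 := by
  refine e.injective <| funext fun m => ?_
  obtain ⟨u, rfl⟩ := h (m + 1)
  simp [he.X_pow_smul_apply]

theorem IsCoeffEquiv.sumXPowSMul_shift_eq (he : IsCoeffEquiv R e) (x : ℕ → W) (j : ℕ) :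
    sumXPowSMul e (fun n => x (n + j))
      = x j + (X : R⟦X⟧) • sumXPowSMul e (fun n => x (n + (j + 1))) := by
  refine e.injective <| funext fun m => ?_
  rcases m with _ | m
  · simp [he _ _ 0]
  · rw [map_add, Pi.add_apply, ← pow_one (X : R⟦X⟧), he.X_pow_smul_apply, if_pos (by omega),
      sumXPowSMul_apply, sumXPowSMul_apply, Finset.sum_range_succ', add_comm]
    simp only [Nat.add_sub_cancel, zero_add, Nat.sub_zero]
    congr 1
    refine Finset.sum_congr rfl fun n _ => ?_
    rw [add_right_comm, add_assoc, Nat.add_sub_add_right]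

theorem IsCoeffEquiv.sumXPowSMul_eq_sum_add (he : IsCoeffEquiv R e) (x : ℕ → W) (k : ℕ) :
    sumXPowSMul e x = ∑ n ∈ Finset.range k, (X : R⟦X⟧) ^ n • x n
      + (X : R⟦X⟧) ^ k • sumXPowSMul e (fun n => x (n + k)) := by
  induction k with
  | zero => simp
  | succ k ih =>
    rw [ih, he.sumXPowSMul_shift_eq, smul_add, smul_smul, ← pow_succ, Finset.sum_range_succ,
      add_assoc]

theorem IsCoeffEquiv.sumXPowSMul_mem (he : IsCoeffEquiv R e) {N : Submodule R⟦X⟧ W}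
    (hN : IsXAdicallyClosed N) {x : ℕ → W} (hx : ∀ n, x n ∈ N) : sumXPowSMul e x ∈ N :=
  hN _ fun k => ⟨_, Submodule.sum_mem _ fun n _ => N.smul_mem _ (hx n), _,
    by rw [he.sumXPowSMul_eq_sum_add x k, add_sub_cancel_left]⟩

theorem IsCoeffEquiv.eq_zero_of_sumXPowSMul_eq_zero (he : IsCoeffEquiv R e)
    {N : Submodule R⟦X⟧ W} (hN : IsXAdicallyClosed N) {N₀ : Set W} (hN₀N : ∀ x ∈ N₀, x ∈ N)
    (hN₀ : ∀ x ∈ N₀, (∃ u ∈ N, x = (X : R⟦X⟧) • u) → x = 0) {x : ℕ → W} (hx : ∀ n, x n ∈ N₀)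
    (h : sumXPowSMul e x = 0) : x = 0 := by
  have tail_mem (j : ℕ) : sumXPowSMul e (fun n => x (n + j)) ∈ N :=
    he.sumXPowSMul_mem hN fun n => hN₀N _ (hx _)
  have head_eq_zero (j : ℕ) (hj : sumXPowSMul e (fun n => x (n + j)) = 0) :
      x j = 0 ∧ sumXPowSMul e (fun n => x (n + (j + 1))) = 0 := by
    have hsplit := he.sumXPowSMul_shift_eq x j
    rw [hj, eq_comm, add_eq_zero_iff_eq_neg, ← smul_neg] at hsplit
    have hxj := hN₀ _ (hx j) ⟨_, N.neg_mem (tail_mem (j + 1)), hsplit⟩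
    refine ⟨hxj, he.X_smul_injective ?_⟩
    simpa [hxj] using hsplit.symm
  have tail_eq_zero (j : ℕ) : sumXPowSMul e (fun n => x (n + j)) = 0 := by
    induction j with
    | zero => simpa using h
    | succ j ih => exact (head_eq_zero j ih).2
  exact funext fun j => (head_eq_zero j (tail_eq_zero j)).1

theorem IsCoeffEquiv.exists_eq_sumXPowSMul (he : IsCoeffEquiv R e) {N : Submodule R⟦X⟧ W}
    {N₀ : Set W} (hN₀ : ∀ w ∈ N, ∃ x ∈ N₀, ∃ u ∈ N, w = x + (X : R⟦X⟧) • u) {w : W}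
    (hw : w ∈ N) : ∃ x : ℕ → W, (∀ n, x n ∈ N₀) ∧ w = sumXPowSMul e x := by
  choose head head_mem tail tail_mem split using fun v : N => hN₀ v v.2
  let rem (k : ℕ) : N := (fun v => ⟨tail v, tail_mem v⟩)^[k] ⟨w, hw⟩
  have partial_sum (k : ℕ) :
      w = ∑ n ∈ Finset.range k, (X : R⟦X⟧) ^ n • head (rem n) + (X : R⟦X⟧) ^ k • (rem k : W) := by
    induction k with
    | zero => simp [rem]
    | succ k ih =>
      rw [ih, split (rem k), Finset.sum_range_succ, smul_add, smul_smul, ← pow_succ, add_assoc]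
      simp [rem, Function.iterate_succ_apply']
  refine ⟨fun n => head (rem n), fun n => head_mem _, eq_of_sub_eq_zero ?_⟩
  refine he.eq_zero_of_forall_eq_X_pow_smul fun k =>
    ⟨rem k - sumXPowSMul e fun n => head (rem (n + k)), ?_⟩
  conv_lhs => rw [partial_sum k, he.sumXPowSMul_eq_sum_add _ k]
  rw [smul_sub, add_sub_add_left_eq_sub]

end PowerSeriesModule

theorem statement9_general (W₀ : Type*) [AddCommGroup W₀] [Module ℂ W₀]
    (W : Type*) [AddCommGroup W] [Module (PowerSeries ℂ) W]
    (e : W ≃+ (ℕ → W₀))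
    (hsmul : ∀ (f : PowerSeries ℂ) (w : W) (n : ℕ),
      e (f • w) n = ∑ k ∈ Finset.range (n + 1), PowerSeries.coeff (R := ℂ) k f • e w (n - k))
    (N : Submodule (PowerSeries ℂ) W)
    (hclosed : ∀ w : W,
      (∀ k : ℕ, ∃ n ∈ N, ∃ u : W, w - n = (PowerSeries.X ^ k : PowerSeries ℂ) • u) → w ∈ N)
    (N₀ : Set W) (hN₀sub : ∀ x ∈ N₀, x ∈ N)
    (hN₀add : ∀ x ∈ N₀, ∀ y ∈ N₀, x + y ∈ N₀)
    (hN₀smul : ∀ (c : ℂ), ∀ x ∈ N₀, PowerSeries.C (R := ℂ) c • x ∈ N₀)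
    (hspan : ∀ w ∈ N, ∃ x ∈ N₀, ∃ u ∈ N, w = x + (PowerSeries.X : PowerSeries ℂ) • u)
    (hindep : ∀ x ∈ N₀, (∃ u ∈ N, x = (PowerSeries.X : PowerSeries ℂ) • u) → x = 0) :
    (∀ x y : ℕ → W, (∀ n, x n ∈ N₀) → (∀ n, y n ∈ N₀) →
      (∀ m : ℕ, ∑ n ∈ Finset.range (m + 1), e (x n) (m - n)
        = ∑ n ∈ Finset.range (m + 1), e (y n) (m - n)) → x = y) ∧
    (∀ w : W, w ∈ N ↔ ∃ x : ℕ → W, (∀ n, x n ∈ N₀) ∧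
      ∀ m : ℕ, e w m = ∑ n ∈ Finset.range (m + 1), e (x n) (m - n)) := by
  have he : PowerSeriesModule.IsCoeffEquiv ℂ e := hsmul
  have sub_mem_N₀ : ∀ x ∈ N₀, ∀ y ∈ N₀, x - y ∈ N₀ := fun x hx y hy => by
    simpa [sub_eq_add_neg] using hN₀add x hx _ (hN₀smul (-1) y hy)
  refine ⟨fun x y hx hy hxy => ?_, fun w => ⟨fun hw => ?_, fun ⟨x, hx, hwx⟩ => ?_⟩⟩
  · have hsum : PowerSeriesModule.sumXPowSMul e (x - y) = 0 := by
      rw [PowerSeriesModule.sumXPowSMul_sub, PowerSeriesModule.sumXPowSMul,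
        PowerSeriesModule.sumXPowSMul, funext hxy, sub_self]
    exact sub_eq_zero.mp <| he.eq_zero_of_sumXPowSMul_eq_zero hclosed hN₀sub hindep
      (fun n => sub_mem_N₀ _ (hx n) _ (hy n)) hsum
  · obtain ⟨x, hx, rfl⟩ := he.exists_eq_sumXPowSMul hspan hw
    exact ⟨x, hx, PowerSeriesModule.sumXPowSMul_apply x⟩
  · have hw : w = PowerSeriesModule.sumXPowSMul e x := e.injective <| funext fun m => by simp [hwx]
    exact hw ▸ he.sumXPowSMul_mem hclosed fun n => hN₀sub _ (hx n)

/-- Let `N` be an ℏ-saturated, ℏ-adically closed ℂ[[ℏ]]-submodule of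
`W = W₀[[ℏ]]` and `N₀` a ℂ-subspace of `N` with `N = N₀ ⊕ ℏN` (as ℂ-vector spaces).
Then the map `(xₙ) ↦ Σₙ ℏⁿxₙ` on sequences in `N₀` is injective with image exactly
`N`. The element `Σₙ ℏⁿxₙ` is the one whose m-th coefficient is
`Σ_{n≤m} (e (x n)) (m-n)`. -/
theorem statement9 (W₀ : Type*) [AddCommGroup W₀] [Module ℂ W₀]
    (W : Type*) [AddCommGroup W] [Module (PowerSeries ℂ) W]
    (e : W ≃+ (ℕ → W₀))
    (hsmul : ∀ (f : PowerSeries ℂ) (w : W) (n : ℕ),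
      e (f • w) n = ∑ k ∈ Finset.range (n + 1), PowerSeries.coeff (R := ℂ) k f • e w (n - k))
    (N : Submodule (PowerSeries ℂ) W)
    (hsat : ∀ w : W, (PowerSeries.X : PowerSeries ℂ) • w ∈ N → w ∈ N)
    (hclosed : ∀ w : W,
      (∀ k : ℕ, ∃ n ∈ N, ∃ u : W, w - n = (PowerSeries.X ^ k : PowerSeries ℂ) • u) → w ∈ N)
    (N₀ : Set W) (hN₀sub : ∀ x ∈ N₀, x ∈ N) (hN₀zero : (0 : W) ∈ N₀)
    (hN₀add : ∀ x ∈ N₀, ∀ y ∈ N₀, x + y ∈ N₀)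
    (hN₀smul : ∀ (c : ℂ), ∀ x ∈ N₀, PowerSeries.C (R := ℂ) c • x ∈ N₀)
    (hspan : ∀ w ∈ N, ∃ x ∈ N₀, ∃ u ∈ N, w = x + (PowerSeries.X : PowerSeries ℂ) • u)
    (hindep : ∀ x ∈ N₀, (∃ u ∈ N, x = (PowerSeries.X : PowerSeries ℂ) • u) → x = 0) :
    (∀ x y : ℕ → W, (∀ n, x n ∈ N₀) → (∀ n, y n ∈ N₀) →
      (∀ m : ℕ, ∑ n ∈ Finset.range (m + 1), e (x n) (m - n)
        = ∑ n ∈ Finset.range (m + 1), e (y n) (m - n)) → x = y) ∧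
    (∀ w : W, w ∈ N ↔ ∃ x : ℕ → W, (∀ n, x n ∈ N₀) ∧
      ∀ m : ℕ, e w m = ∑ n ∈ Finset.range (m + 1), e (x n) (m - n)) :=
  statement9_general W₀ W e hsmul N hclosed N₀ hN₀sub hN₀add hN₀smul hspan hindep
end

section
/- Let A be a unital associative ℂ-algebra such that every A-module is semisimple. Let W₀ be a nonzero ℂ-vector space and suppose W = W₀[[ℏ]] carries an A-module structure extending its ℂ-vector space structure such that every a ∈ A acts as a ℂ[[ℏ]]-linear endomorphism of W. Assume that the only ℂ[[ℏ]]-submodules of W that are A-invariant, ℏ-saturated, and ℏ-adically closed are 0 and W. Then there exists an A-invariant ℂ-subspace M₀ of W such that M₀ is a simple A-module and the map sending a sequence (xₙ)_{n∈ℕ} of elements of M₀ to Σₙ ℏⁿxₙ is a bijection from such sequences onto W. -/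
/-!
By semisimplicity, the `A`-submodule `ℏW` has an `A`-stable complement `M₀`. Since `ℏW` is the
kernel of the constant coefficient `W → W₀`, that map restricts to a bijection `M₀ → W₀`, and
peeling off constant coefficients gives every `w` a unique `ℏ`-adic expansion `∑ ℏⁿ xₙ` with
`xₙ ∈ M₀`. For an `A`-submodule `P ⊆ M₀`, the series with coefficients in `P` form an
`A`-invariant, `ℏ`-saturated, `ℏ`-adically closed `ℂ⟦ℏ⟧`-submodule of `W`; by hypothesis it is
`0` or `W`, so `P` is `0` or `M₀`.
-/

open Finset PowerSeries

local notation "ℏ" => (X : ℂ⟦X⟧)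

theorem sum_range_map_coeff_X_pow_smul {R S M : Type*} [CommSemiring R] [Semiring S]
    [AddCommMonoid M] [Module S M] (φ : R →+* S) (j n : ℕ) (z : ℕ → M) :
    ∑ k ∈ range (n + 1), φ (coeff k (X ^ j : R⟦X⟧)) • z (n - k) =
      if j ≤ n then z (n - j) else 0 := by
  simp [coeff_X_pow, apply_ite φ, ite_smul]

section Expansion

variable {W₀ W : Type*} [AddCommGroup W₀] [AddCommGroup W] {e : W ≃+ (ℕ → W₀)}

/-- `w = ∑ₙ ℏⁿ xₙ`. -/
def IsExpansion (e : W ≃+ (ℕ → W₀)) (w : W) (x : ℕ → W) : Prop :=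
  ∀ m, e w m = ∑ n ∈ range (m + 1), e (x n) (m - n)

/-- `P⟦ℏ⟧`: the series `∑ₙ ℏⁿ xₙ` with all `xₙ ∈ P`. -/
def formalSeries (e : W ≃+ (ℕ → W₀)) (P : Set W) : Set W :=
  {w | ∃ x : ℕ → W, (∀ n, x n ∈ P) ∧ IsExpansion e w x}

theorem isExpansion_zero : IsExpansion e 0 0 := fun m => by simp

theorem isExpansion_single (p : W) : IsExpansion e p (Pi.single 0 p) := fun m => by
  rw [sum_range_succ']
  simp

theorem IsExpansion.add {w v : W} {x y : ℕ → W} (hx : IsExpansion e w x) (hy : IsExpansion e v y) :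
    IsExpansion e (w + v) (x + y) := fun m => by
  simp [hx m, hy m, sum_add_distrib]

theorem eq_of_forall_sum_range_eq {S : Set W} (hS : Set.InjOn (fun p => e p 0) S)
    {x y : ℕ → W} (hx : ∀ n, x n ∈ S) (hy : ∀ n, y n ∈ S)
    (h : ∀ m, ∑ n ∈ range (m + 1), e (x n) (m - n) = ∑ n ∈ range (m + 1), e (y n) (m - n)) :
    x = y := by
  funext n
  induction n using Nat.strong_induction_on with
  | _ n ih =>
    have hlow : ∑ k ∈ range n, e (x k) (n - k) = ∑ k ∈ range n, e (y k) (n - k) :=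
      sum_congr rfl fun k hk => by rw [ih k (mem_range.1 hk)]
    have hn := h n
    rw [sum_range_succ, sum_range_succ, hlow, Nat.sub_self] at hn
    exact hS (hx n) (hy n) (add_left_cancel hn)

theorem IsExpansion.eq {S : Set W} (hS : Set.InjOn (fun p => e p 0) S) {w : W} {x y : ℕ → W}
    (hxS : ∀ n, x n ∈ S) (hyS : ∀ n, y n ∈ S) (hx : IsExpansion e w x) (hy : IsExpansion e w y) :
    x = y :=
  eq_of_forall_sum_range_eq hS hxS hyS fun m => (hx m).symm.trans (hy m)

theorem add_mem_formalSeries {P : AddSubmonoid W} {w v : W} (hw : w ∈ formalSeries e P)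
    (hv : v ∈ formalSeries e P) : w + v ∈ formalSeries e P :=
  let ⟨x, hxP, hx⟩ := hw
  let ⟨y, hyP, hy⟩ := hv
  ⟨x + y, fun n => add_mem (hxP n) (hyP n), hx.add hy⟩

variable [Module ℂ W₀] [Module ℂ⟦X⟧ W]

/-- `e` identifies `W` with `W₀⟦ℏ⟧`, power series acting by convolution of coefficients. -/
def SMulByConvolution (e : W ≃+ (ℕ → W₀)) : Prop :=
  ∀ (f : ℂ⟦X⟧) (w : W) (n : ℕ), e (f • w) n = ∑ k ∈ range (n + 1), coeff k f • e w (n - k)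

namespace SMulByConvolution

theorem apply_X_pow_smul (he : SMulByConvolution e) (j : ℕ) (w : W) (n : ℕ) :
    e (ℏ ^ j • w) n = if j ≤ n then e w (n - j) else 0 := by
  rw [he]
  exact sum_range_map_coeff_X_pow_smul (RingHom.id ℂ) j n (e w)

theorem apply_C_smul (he : SMulByConvolution e) (c : ℂ) (w : W) (n : ℕ) :
    e (C c • w) n = c • e w n := by
  rw [he, sum_range_succ']
  simp [coeff_C]

theorem exists_eq_X_pow_smul (he : SMulByConvolution e) {w : W} {k : ℕ}
    (h : ∀ m < k, e w m = 0) : ∃ u, w = ℏ ^ k • u := by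
  refine ⟨e.symm fun n => e w (n + k), e.injective <| funext fun n => ?_⟩
  rw [he.apply_X_pow_smul]
  split_ifs with hk
  · simp [Nat.sub_add_cancel hk]
  · exact h n (by omega)

theorem exists_X_smul_eq_iff (he : SMulByConvolution e) {w : W} :
    (∃ u, ℏ • u = w) ↔ e w 0 = 0 := by
  refine ⟨fun ⟨u, hu⟩ => ?_, fun h => ?_⟩
  · rw [← hu, ← pow_one ℏ, he.apply_X_pow_smul, if_neg (by omega)]
  · obtain ⟨u, hu⟩ := he.exists_eq_X_pow_smul (k := 1) fun m hm => by rwa [Nat.lt_one_iff.1 hm]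
    exact ⟨u, by rw [hu, pow_one]⟩

theorem apply_sum_X_pow_smul (he : SMulByConvolution e) (x : ℕ → W) {i k : ℕ} (hik : i < k) :
    e (∑ n ∈ range k, ℏ ^ n • x n) i = ∑ n ∈ range (i + 1), e (x n) (i - n) := by
  simp only [map_sum, Finset.sum_apply, he.apply_X_pow_smul]
  rw [← sum_range_add_sum_Ico _ (show i + 1 ≤ k by omega),
    sum_eq_zero (s := Ico (i + 1) k) fun n hn => if_neg (by simp at hn; omega), add_zero]
  exact sum_congr rfl fun n hn => if_pos (by simp at hn; omega)

theorem isExpansion_iff (he : SMulByConvolution e) {w : W} {x : ℕ → W} :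
    IsExpansion e w x ↔ ∀ k, ∃ u, w - ∑ n ∈ range k, ℏ ^ n • x n = ℏ ^ k • u := by
  refine ⟨fun hx k => he.exists_eq_X_pow_smul fun i hik => ?_, fun h m => ?_⟩
  · rw [map_sub, Pi.sub_apply, hx, he.apply_sum_X_pow_smul x hik, sub_self]
  · obtain ⟨u, hu⟩ := h (m + 1)
    rw [← he.apply_sum_X_pow_smul x (Nat.lt_succ_self m), ← sub_eq_zero, ← Pi.sub_apply,
      ← map_sub, hu, he.apply_X_pow_smul, if_neg (by omega)]

theorem exists_isExpansion (he : SMulByConvolution e) {S : Set W}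
    (hS : Set.SurjOn (fun p => e p 0) S Set.univ) (w : W) :
    ∃ x, (∀ n, x n ∈ S) ∧ IsExpansion e w x := by
  have hdec : ∀ w : W, ∃ p ∈ S, ∃ r, w = p + ℏ • r := by
    intro w
    obtain ⟨p, hp, hpw⟩ := hS (Set.mem_univ (e w 0))
    obtain ⟨r, hr⟩ := he.exists_X_smul_eq_iff.2 (show e (w - p) 0 = 0 by simp [hpw])
    exact ⟨p, hp, r, by rw [hr, add_sub_cancel]⟩
  choose p hp r hr using hdec
  refine ⟨fun n => p (r^[n] w), fun n => hp _, fun m => ?_⟩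
  induction m generalizing w with
  | zero =>
    conv_lhs => rw [hr w]
    simp [he.exists_X_smul_eq_iff.1 ⟨r w, rfl⟩]
  | succ m ih =>
    conv_lhs => rw [hr w]
    rw [sum_range_succ', map_add, Pi.add_apply, ← pow_one ℏ, he.apply_X_pow_smul,
      if_pos (by omega), Nat.add_sub_cancel, ih (r w), add_comm]
    simp only [Function.iterate_succ_apply, Nat.add_sub_add_right, Function.iterate_zero_apply,
      Nat.sub_zero]

end SMulByConvolution

theorem IsExpansion.smul (he : SMulByConvolution e) {w : W} {x : ℕ → W}
    (hx : IsExpansion e w x) (f : ℂ⟦X⟧) :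
    IsExpansion e (f • w) fun n => ∑ k ∈ range (n + 1), C (coeff k f) • x (n - k) := by
  intro m
  have hrhs : ∀ n ∈ range (m + 1),
      e (∑ k ∈ range (n + 1), C (coeff k f) • x (n - k)) (m - n) =
        ∑ k ∈ range (n + 1), coeff k f • e (x (n - k)) (m - (k + (n - k))) := by
    intro n hn
    simp only [map_sum, Finset.sum_apply, he.apply_C_smul]
    refine sum_congr rfl fun k hk => ?_
    simp only [mem_range] at hk
    rw [Nat.add_sub_cancel' (by omega)]
  rw [sum_congr rfl hrhs, sum_range_diag_flip (m + 1) fun k j => coeff k f • e (x j) (m - (k + j)),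
    he]
  refine sum_congr rfl fun k hk => ?_
  simp only [mem_range] at hk
  rw [hx, smul_sum, show m - k + 1 = m + 1 - k by omega]
  simp only [Nat.sub_sub]

theorem IsExpansion.X_pow_smul (he : SMulByConvolution e) {w : W} {x : ℕ → W}
    (hx : IsExpansion e w x) (j : ℕ) :
    IsExpansion e (ℏ ^ j • w) fun n => if j ≤ n then x (n - j) else 0 := by
  simpa only [sum_range_map_coeff_X_pow_smul] using hx.smul he (ℏ ^ j)

theorem IsExpansion.map (he : SMulByConvolution e) {w : W} {x : ℕ → W}
    (hx : IsExpansion e w x) (g : W →ₗ[ℂ⟦X⟧] W) : IsExpansion e (g w) (g ∘ x) := by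
  rw [he.isExpansion_iff] at hx ⊢
  intro k
  obtain ⟨u, hu⟩ := hx k
  exact ⟨g u, by simpa [map_sub, map_sum] using congrArg g hu⟩

theorem smul_mem_formalSeries (he : SMulByConvolution e) {P : AddSubmonoid W}
    (hP : ∀ c : ℂ, ∀ p ∈ P, C c • p ∈ P) (f : ℂ⟦X⟧) {w : W} (hw : w ∈ formalSeries e P) :
    f • w ∈ formalSeries e P :=
  let ⟨_, hxP, hx⟩ := hw
  ⟨_, fun _ => sum_mem fun _ _ => hP _ _ (hxP _), hx.smul he f⟩

theorem map_mem_formalSeries (he : SMulByConvolution e) {P : Set W} (g : W →ₗ[ℂ⟦X⟧] W)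
    (hg : ∀ p ∈ P, g p ∈ P) {w : W} (hw : w ∈ formalSeries e P) : g w ∈ formalSeries e P :=
  let ⟨x, hxP, hx⟩ := hw
  ⟨g ∘ x, fun n => hg _ (hxP n), hx.map he g⟩

theorem mem_formalSeries_of_X_smul_mem (he : SMulByConvolution e) {S P : AddSubmonoid W}
    (hS : Set.BijOn (fun p => e p 0) S Set.univ) (hPS : P ≤ S) {w : W}
    (h : ℏ • w ∈ formalSeries e P) : w ∈ formalSeries e P := by
  obtain ⟨y, hyP, hy⟩ := h
  obtain ⟨x, hxS, hx⟩ := he.exists_isExpansion hS.surjOn w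
  have hXx := hx.X_pow_smul he 1
  rw [pow_one] at hXx
  have hxy := hXx.eq hS.injOn (fun n => by split_ifs; exacts [hxS _, zero_mem S])
    (fun n => hPS (hyP n)) hy
  refine ⟨x, fun n => ?_, hx⟩
  have hxn := congrFun hxy (n + 1)
  simp only [le_add_iff_nonneg_left, zero_le, if_true, Nat.add_sub_cancel] at hxn
  exact hxn ▸ hyP (n + 1)

theorem mem_formalSeries_of_forall_sub_eq_X_pow_smul (he : SMulByConvolution e)
    {S P : AddSubmonoid W} (hS : Set.BijOn (fun p => e p 0) S Set.univ) (hPS : P ≤ S) {w : W}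
    (h : ∀ k, ∃ v ∈ formalSeries e P, ∃ u, w - v = ℏ ^ k • u) : w ∈ formalSeries e P := by
  obtain ⟨x, hxS, hx⟩ := he.exists_isExpansion hS.surjOn w
  refine ⟨x, fun i => ?_, hx⟩
  obtain ⟨v, ⟨y, hyP, hy⟩, u, hu⟩ := h (i + 1)
  obtain ⟨z, hzS, hz⟩ := he.exists_isExpansion hS.surjOn u
  have hw : w = v + ℏ ^ (i + 1) • u := by rw [← hu, add_sub_cancel]
  have hxy := hx.eq hS.injOn hxS
    (fun n => add_mem (hPS (hyP n)) (by split_ifs; exacts [hzS _, zero_mem S]))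
    (hw ▸ hy.add (hz.X_pow_smul he (i + 1)))
  rw [congrFun hxy i]
  simpa using hyP i

theorem bijOn_apply_zero_of_isCompl {A : Type*} [Ring A] [Module A W] (he : SMulByConvolution e)
    {N M : Submodule A W} (hN : ∀ w, w ∈ N ↔ ∃ u, ℏ • u = w) (hNM : IsCompl N M) :
    Set.BijOn (fun p => e p 0) M Set.univ := by
  refine ⟨Set.mapsTo_univ _ _, fun p hp q hq hpq => ?_, fun w₀ _ => ?_⟩
  · have hpq' : p - q ∈ N := (hN _).2 (he.exists_X_smul_eq_iff.2 (by simpa [sub_eq_zero] using hpq))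
    exact sub_eq_zero.1 (Submodule.disjoint_def.1 hNM.disjoint _ hpq' (M.sub_mem hp hq))
  · have hw : e.symm (fun _ => w₀) ∈ N ⊔ M := hNM.codisjoint.eq_top ▸ Submodule.mem_top
    obtain ⟨t, ht, p, hp, htp⟩ := Submodule.mem_sup.1 hw
    refine ⟨p, hp, ?_⟩
    have h0 := congrFun (congrArg e htp) 0
    rwa [map_add, Pi.add_apply, he.exists_X_smul_eq_iff.1 ((hN t).1 ht), zero_add,
      AddEquiv.apply_symm_apply] at h0

theorem eq_bot_or_eq_of_irreducible {A : Type*} [Ring A] (he : SMulByConvolution e)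
    (ρ : A →+* Module.End ℂ⟦X⟧ W)
    (hirr : ∀ N : Submodule ℂ⟦X⟧ W, (∀ a : A, ∀ w ∈ N, ρ a w ∈ N) → (∀ w : W, ℏ • w ∈ N → w ∈ N) →
      (∀ w : W, (∀ k : ℕ, ∃ n ∈ N, ∃ u : W, w - n = ℏ ^ k • u) → w ∈ N) → N = ⊥ ∨ N = ⊤)
    {S P : AddSubmonoid W} (hS : Set.BijOn (fun p => e p 0) S Set.univ) (hPS : P ≤ S)
    (hPC : ∀ c : ℂ, ∀ p ∈ P, C c • p ∈ P) (hPρ : ∀ a : A, ∀ p ∈ P, ρ a p ∈ P) :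
    P = ⊥ ∨ P = S := by
  let N : Submodule ℂ⟦X⟧ W :=
    { carrier := formalSeries e P
      zero_mem' := ⟨0, fun _ => zero_mem P, isExpansion_zero⟩
      add_mem' := add_mem_formalSeries
      smul_mem' := smul_mem_formalSeries he hPC }
  have hsingle : ∀ {Q : AddSubmonoid W} {p : W}, p ∈ Q → ∀ n, (Pi.single 0 p : ℕ → W) n ∈ Q :=
    fun hp n => by rcases n with _ | n <;> simp [hp]
  rcases hirr N (fun a _ => map_mem_formalSeries he (ρ a) (hPρ a))
      (fun _ => mem_formalSeries_of_X_smul_mem he hS hPS)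
      (fun _ => mem_formalSeries_of_forall_sub_eq_X_pow_smul he hS hPS) with hN | hN
  · refine .inl <| eq_bot_iff.2 fun p hp => ?_
    have hpN : p ∈ N := ⟨_, hsingle hp, isExpansion_single p⟩
    exact (Submodule.mem_bot _).1 (hN ▸ hpN)
  · refine .inr <| le_antisymm hPS fun s hs => ?_
    obtain ⟨x, hxP, hx⟩ : s ∈ N := hN ▸ Submodule.mem_top
    have hxs := (isExpansion_single s).eq hS.injOn (hsingle hs) (fun n => hPS (hxP n)) hx
    simpa [← congrFun hxs 0] using hxP 0

end Expansion

/-- Let `A` be a unital associative ℂ-algebra all of whose modules are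
semisimple, acting (via the ring homomorphism `ρ`, extending the ℂ-structure) by
ℂ[[ℏ]]-linear endomorphisms on `W = W₀[[ℏ]]` with `W₀` nonzero. If the only
`A`-invariant, ℏ-saturated, ℏ-adically closed ℂ[[ℏ]]-submodules of `W` are `0` and
`W`, then there is an `A`-invariant ℂ-subspace `M₀` of `W` which is a simple
`A`-module and such that `(xₙ) ↦ Σₙ ℏⁿxₙ` is a bijection from sequences in `M₀`
onto `W`. -/
theorem statement10 (A : Type) [Ring A] [Algebra ℂ A]
    (hss : ∀ (M : Type) [AddCommGroup M] [Module A M], IsSemisimpleModule A M)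
    (W₀ : Type) [AddCommGroup W₀] [Module ℂ W₀] [Nontrivial W₀]
    (W : Type) [AddCommGroup W] [Module (PowerSeries ℂ) W]
    (e : W ≃+ (ℕ → W₀))
    (hsmul : ∀ (f : PowerSeries ℂ) (w : W) (n : ℕ),
      e (f • w) n = ∑ k ∈ Finset.range (n + 1), PowerSeries.coeff k f • e w (n - k))
    (ρ : A →+* Module.End (PowerSeries ℂ) W)
    (hρC : ∀ (c : ℂ) (w : W), ρ (algebraMap ℂ A c) w = PowerSeries.C c • w)
    (hirr : ∀ N : Submodule (PowerSeries ℂ) W,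
      (∀ (a : A), ∀ w ∈ N, ρ a w ∈ N) →
      (∀ w : W, (PowerSeries.X : PowerSeries ℂ) • w ∈ N → w ∈ N) →
      (∀ w : W, (∀ k : ℕ, ∃ n ∈ N, ∃ u : W, w - n = (PowerSeries.X ^ k : PowerSeries ℂ) • u) → w ∈ N) →
      N = ⊥ ∨ N = ⊤) :
    ∃ M₀ : Set W,
      (0 : W) ∈ M₀ ∧
      (∀ x ∈ M₀, ∀ y ∈ M₀, x + y ∈ M₀) ∧
      (∀ (c : ℂ), ∀ x ∈ M₀, PowerSeries.C c • x ∈ M₀) ∧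
      (∀ (a : A), ∀ x ∈ M₀, ρ a x ∈ M₀) ∧
      (∃ x ∈ M₀, x ≠ 0) ∧
      (∀ P : Set W, P ⊆ M₀ → (0 : W) ∈ P → (∀ x ∈ P, ∀ y ∈ P, x + y ∈ P) →
        (∀ (c : ℂ), ∀ x ∈ P, PowerSeries.C c • x ∈ P) →
        (∀ (a : A), ∀ x ∈ P, ρ a x ∈ P) → P = {0} ∨ P = M₀) ∧
      (∀ x y : ℕ → W, (∀ n, x n ∈ M₀) → (∀ n, y n ∈ M₀) →
        (∀ m : ℕ, ∑ n ∈ Finset.range (m + 1), e (x n) (m - n)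
          = ∑ n ∈ Finset.range (m + 1), e (y n) (m - n)) → x = y) ∧
      (∀ w : W, ∃ x : ℕ → W, (∀ n, x n ∈ M₀) ∧
        ∀ m : ℕ, e w m = ∑ n ∈ Finset.range (m + 1), e (x n) (m - n)) := by
  have he : SMulByConvolution e := hsmul
  let _ : Module A W := Module.compHom W ρ
  have := hss W
  let ℏW : W →ₗ[A] W :=
    { toFun := fun w => ℏ • w
      map_add' := smul_add ℏ
      map_smul' := fun a w => ((ρ a).map_smul ℏ w).symm }
  obtain ⟨M₀, hM₀⟩ := exists_isCompl (LinearMap.range ℏW)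
  have hbij := bijOn_apply_zero_of_isCompl he (fun _ => LinearMap.mem_range) hM₀
  obtain ⟨w₀, hw₀⟩ := exists_ne (0 : W₀)
  obtain ⟨p, hp, hpw₀⟩ := hbij.surjOn (Set.mem_univ w₀)
  refine ⟨M₀, M₀.zero_mem, fun _ hx _ hy => M₀.add_mem hx hy,
    fun c x hx => hρC c x ▸ M₀.smul_mem (algebraMap ℂ A c) hx, fun a _ hx => M₀.smul_mem a hx,
    ⟨p, hp, fun hp0 => hw₀ (by simpa [hp0] using hpw₀.symm)⟩, fun P hPM₀ hP0 hPadd hPC hPρ => ?_,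
    fun _ _ hx hy => eq_of_forall_sum_range_eq hbij.injOn hx hy,
    he.exists_isExpansion hbij.surjOn⟩
  let P' : AddSubmonoid W := ⟨⟨P, fun {x y} hx hy => hPadd x hx y hy⟩, hP0⟩
  rcases eq_bot_or_eq_of_irreducible he ρ hirr (S := M₀.toAddSubmonoid) (P := P') hbij
    (fun x hx => hPM₀ hx) hPC hPρ with h | h
  · exact .inl (by simpa [P'] using congrArg SetLike.coe h)
  · exact .inr (by simpa [P'] using congrArg SetLike.coe h)
end

section
/- Let A be a unital associative ℂ-algebra such that every A-module is semisimple. Let W₀ be a ℂ-vector space and suppose W = W₀[[ℏ]] carries an A-module structure extending its ℂ-vector space structure such that every a ∈ A acts as a ℂ[[ℏ]]-linear endomorphism of W. Let N be a ℂ[[ℏ]]-submodule of W that is A-invariant, ℏ-saturated, and ℏ-adically closed. Then there exists a ℂ[[ℏ]]-submodule N″ of W, also A-invariant, ℏ-saturated, and ℏ-adically closed, such that W = N ⊕ N″. -/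
/-!
Let `h` be multiplication by `ℏ`, an `A`-linear endomorphism of `W`. By induction on `k` we build
a decreasing sequence of `h`-stable `A`-submodules `Cₖ ⊇ ℏᵏW` that complement `N` modulo `ℏᵏW`,
i.e. `N + Cₖ = W` and `(N + ℏᵏW) ∩ Cₖ = ℏᵏW`. Semisimplicity gives an `A`-complement `E` of
`ℏCₖ + (Cₖ ∩ (N + ℏᵏ⁺¹W))` inside `Cₖ`, and `Cₖ₊₁ = ℏCₖ + E` works: saturation of `N` is what
forces `(N + ℏᵏ⁺¹W) ∩ ℏCₖ = ℏᵏ⁺¹W`. The complement is `N″ = ⋂ Cₖ`. It meets `N` trivially because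
`W` is `ℏ`-adically separated, and `N + N″ = W` because the approximations `nₖ ∈ N` of `w` modulo
`Cₖ` form an `ℏ`-adic Cauchy sequence, whose limit lies in `N` since `N` is closed. Finally a closed
`A`-submodule stable under `ℏ` is stable under all of `ℂ[[ℏ]]`, as polynomials are `ℏ`-adically
dense.
-/

theorem sup_inf_le_of_disjoint_sup {α : Type*} [Lattice α] [OrderBot α] [IsModularLattice α]
    {a b c : α} (h : Disjoint (a ⊔ b) c) : (a ⊔ c) ⊓ b ≤ a :=
  calc (a ⊔ c) ⊓ b ≤ (a ⊔ c) ⊓ (a ⊔ b) := inf_le_inf_left _ le_sup_right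
    _ = a ⊔ c ⊓ (a ⊔ b) := sup_inf_assoc_of_le c le_sup_left
    _ = a := by rw [inf_comm, h.eq_bot, sup_bot_eq]

namespace Module.End

open LinearMap

variable {A W : Type*} [Ring A] [AddCommGroup W] [Module A W] (h : Module.End A W)

def IsSaturated (N : Submodule A W) : Prop := ∀ w, h w ∈ N → w ∈ N

def IsAdicClosed (N : Submodule A W) : Prop :=
  ∀ w, (∀ k, ∃ n ∈ N, w - n ∈ range (h ^ k)) → w ∈ N

theorem range_pow_succ (k : ℕ) : range (h ^ (k + 1)) = (range (h ^ k)).map h := by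
  rw [pow_succ', Module.End.mul_eq_comp, range_comp]

structure IsComplementModPow (N : Submodule A W) (k : ℕ) (C : Submodule A W) : Prop where
  map_le : C.map h ≤ C
  range_pow_le : range (h ^ k) ≤ C
  sup_inf_eq : (N ⊔ range (h ^ k)) ⊓ C = range (h ^ k)
  sup_eq_top : N ⊔ C = ⊤

variable {h} {N : Submodule A W}

theorem isComplementModPow_zero : h.IsComplementModPow N 0 ⊤ where
  map_le := le_top
  range_pow_le := le_top
  sup_inf_eq := by rw [pow_zero, one_eq_id, range_id, sup_top_eq, top_inf_eq]
  sup_eq_top := sup_top_eq _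

namespace IsComplementModPow

variable {k : ℕ} {C : Submodule A W}

theorem inf_le (hC : h.IsComplementModPow N k C) : N ⊓ C ≤ range (h ^ k) :=
  hC.sup_inf_eq ▸ inf_le_inf_right _ le_sup_left

theorem range_pow_succ_le_map (hC : h.IsComplementModPow N k C) :
    range (h ^ (k + 1)) ≤ C.map h := by
  rw [range_pow_succ]
  exact Submodule.map_mono hC.range_pow_le

theorem inf_map_le (hsat : h.IsSaturated N) (hC : h.IsComplementModPow N k C) :
    N ⊓ C.map h ≤ range (h ^ (k + 1)) := by
  rintro _ ⟨hN, c, hc, rfl⟩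
  have hcN : c ∈ (N ⊔ range (h ^ k)) ⊓ C := ⟨Submodule.mem_sup_left (hsat c hN), hc⟩
  rw [hC.sup_inf_eq] at hcN
  rw [range_pow_succ]
  exact Submodule.mem_map_of_mem hcN

theorem exists_succ_le [IsSemisimpleModule A W] (hsat : h.IsSaturated N)
    (hC : h.IsComplementModPow N k C) : ∃ C' ≤ C, h.IsComplementModPow N (k + 1) C' := by
  set S := C.map h
  set P := C ⊓ (N ⊔ range (h ^ (k + 1)))
  have hS : range (h ^ (k + 1)) ≤ S := hC.range_pow_succ_le_map
  have hSC : S ≤ C := hC.map_le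
  obtain ⟨E, hdisj, hSPE⟩ :=
    IsModularLattice.exists_disjoint_and_sup_eq (sup_le hSC (inf_le_left : P ≤ C))
  have hC'C : S ⊔ E ≤ C := hSPE ▸ sup_le_sup_right le_sup_left E
  refine ⟨S ⊔ E, hC'C, ⟨(Submodule.map_mono hC'C).trans le_sup_left, hS.trans le_sup_left,
    le_antisymm ?_ (le_inf le_sup_right (hS.trans le_sup_left)), ?_⟩⟩
  · calc (N ⊔ range (h ^ (k + 1))) ⊓ (S ⊔ E) = (S ⊔ E) ⊓ P := by
          rw [inf_comm, inf_left_comm, ← inf_assoc, inf_eq_right.mpr hC'C]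
      _ ≤ S ⊓ (N ⊔ range (h ^ (k + 1))) :=
          le_inf (sup_inf_le_of_disjoint_sup hdisj) (inf_le_right.trans inf_le_right)
      _ = N ⊓ S ⊔ range (h ^ (k + 1)) := by
          rw [inf_comm, sup_comm, sup_inf_assoc_of_le N hS, sup_comm]
      _ ≤ range (h ^ (k + 1)) := sup_le (hC.inf_map_le hsat) le_rfl
  · rw [eq_top_iff, ← hC.sup_eq_top, ← hSPE]
    refine sup_le le_sup_left (sup_le (sup_le ?_ ?_) ?_)
    · exact le_sup_left.trans le_sup_right
    · exact inf_le_right.trans (sup_le_sup_left (hS.trans le_sup_left) N)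
    · exact le_sup_right.trans le_sup_right

end IsComplementModPow

theorem exists_antitone_isComplementModPow [IsSemisimpleModule A W] (hsat : h.IsSaturated N) :
    ∃ C : ℕ → Submodule A W, Antitone C ∧ ∀ k, h.IsComplementModPow N k (C k) := by
  have step : ∀ k C, h.IsComplementModPow N k C →
      ∃ C' ≤ C, h.IsComplementModPow N (k + 1) C' := fun k C hC => hC.exists_succ_le hsat
  choose! next hnext_le hnext using step
  let C : ℕ → Submodule A W := fun k => Nat.rec ⊤ next k
  have hC : ∀ k, h.IsComplementModPow N k (C k) := fun k => by
    induction k with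
    | zero => exact isComplementModPow_zero
    | succ k ih => exact hnext k (C k) ih
  exact ⟨C, antitone_nat_of_succ_le fun k => hnext_le k (C k) (hC k), hC⟩

theorem isSaturated_of_isCompl (hinj : Function.Injective h) {N'' : Submodule A W}
    (hN : N.map h ≤ N) (hN'' : N''.map h ≤ N'') (hcompl : IsCompl N N'') : h.IsSaturated N'' := by
  intro w hw
  obtain ⟨n, hn, c, hc, rfl⟩ :=
    Submodule.mem_sup.mp (hcompl.sup_eq_top ▸ Submodule.mem_top : w ∈ N ⊔ N'')
  have hhn : h n ∈ N ⊓ N'' := ⟨hN (Submodule.mem_map_of_mem hn), by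
    simpa using N''.sub_mem hw (hN'' (Submodule.mem_map_of_mem hc))⟩
  rw [hcompl.inf_eq_bot, Submodule.mem_bot, ← h.map_zero] at hhn
  rwa [hinj hhn, zero_add]

section Limit

variable {C : ℕ → Submodule A W}

theorem map_iInf_le (hC : ∀ k, (C k).map h ≤ C k) : (⨅ k, C k).map h ≤ ⨅ k, C k :=
  le_iInf fun k => (Submodule.map_mono (iInf_le C k)).trans (hC k)

theorem disjoint_iInf (hC : ∀ k, h.IsComplementModPow N k (C k))
    (hsep : ∀ w, (∀ k, w ∈ range (h ^ k)) → w = 0) : Disjoint N (⨅ k, C k) :=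
  Submodule.disjoint_def.mpr fun w hwN hwC =>
    hsep w fun k => (hC k).inf_le ⟨hwN, Submodule.mem_iInf _ |>.mp hwC k⟩

theorem codisjoint_iInf (hC : ∀ k, h.IsComplementModPow N k (C k)) (hanti : Antitone C)
    (hcomplete : ∀ x : ℕ → W, (∀ k j, k ≤ j → x j - x k ∈ range (h ^ k)) →
      ∃ y, ∀ k, y - x k ∈ range (h ^ k))
    (hclosed : h.IsAdicClosed N) : Codisjoint N (⨅ k, C k) := by
  rw [codisjoint_iff, eq_top_iff]
  intro w _
  have happrox : ∀ k, ∃ n ∈ N, w - n ∈ C k := fun k => by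
    obtain ⟨n, hn, c, hc, rfl⟩ :=
      Submodule.mem_sup.mp ((hC k).sup_eq_top ▸ Submodule.mem_top : w ∈ N ⊔ C k)
    exact ⟨n, hn, by simpa using hc⟩
  choose n hnN hnC using happrox
  obtain ⟨m, hm⟩ := hcomplete n fun k j hkj => (hC k).inf_le ⟨N.sub_mem (hnN j) (hnN k), by
    rw [show n j - n k = (w - n k) - (w - n j) by abel]
    exact (C k).sub_mem (hnC k) (hanti hkj (hnC j))⟩
  refine Submodule.mem_sup.mpr ⟨m, hclosed m fun k => ⟨n k, hnN k, hm k⟩, w - m,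
    Submodule.mem_iInf _ |>.mpr fun k => ?_, add_sub_cancel _ _⟩
  rw [show w - m = (w - n k) - (m - n k) by abel]
  exact (C k).sub_mem (hnC k) ((hC k).range_pow_le (hm k))

theorem isAdicClosed_iInf (hC : ∀ k, range (h ^ k) ≤ C k) : h.IsAdicClosed (⨅ k, C k) := by
  intro w hw
  refine Submodule.mem_iInf _ |>.mpr fun k => ?_
  obtain ⟨n, hn, hwn⟩ := hw k
  rw [← add_sub_cancel n w]
  exact (C k).add_mem (Submodule.mem_iInf _ |>.mp hn k) (hC k hwn)

end Limit

theorem exists_isCompl_isSaturated_isAdicClosed [IsSemisimpleModule A W]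
    (hinj : Function.Injective h) (hsep : ∀ w, (∀ k, w ∈ range (h ^ k)) → w = 0)
    (hcomplete : ∀ x : ℕ → W, (∀ k j, k ≤ j → x j - x k ∈ range (h ^ k)) →
      ∃ y, ∀ k, y - x k ∈ range (h ^ k))
    (hN : N.map h ≤ N) (hsat : h.IsSaturated N) (hclosed : h.IsAdicClosed N) :
    ∃ N'' : Submodule A W, N''.map h ≤ N'' ∧ h.IsSaturated N'' ∧ h.IsAdicClosed N'' ∧
      IsCompl N N'' := by
  obtain ⟨C, hanti, hC⟩ := exists_antitone_isComplementModPow hsat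
  have hcompl : IsCompl N (⨅ k, C k) :=
    ⟨disjoint_iInf hC hsep, codisjoint_iInf hC hanti hcomplete hclosed⟩
  have hmap := map_iInf_le fun k => (hC k).map_le
  exact ⟨⨅ k, C k, hmap, isSaturated_of_isCompl hinj hN hmap hcompl,
    isAdicClosed_iInf fun k => (hC k).range_pow_le, hcompl⟩

end Module.End

open PowerSeries

/-- `e` identifies `W` with `W₀⟦X⟧`, on which `R⟦X⟧` acts by the Cauchy product. -/
def IsCoeffEquiv (R : Type*) {W₀ W : Type*} [CommRing R] [AddCommGroup W₀] [Module R W₀]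
    [AddCommGroup W] [Module R⟦X⟧ W] (e : W ≃+ (ℕ → W₀)) : Prop :=
  ∀ (f : R⟦X⟧) (w : W) (n : ℕ), e (f • w) n = ∑ k ∈ Finset.range (n + 1), coeff k f • e w (n - k)

section Coefficients

variable {R W₀ W : Type*} [CommRing R] [AddCommGroup W₀] [Module R W₀] [AddCommGroup W]
  [Module R⟦X⟧ W] {e : W ≃+ (ℕ → W₀)}

theorem coeff_X_pow_smul (hsmul : IsCoeffEquiv R e) (k : ℕ) (u : W) (n : ℕ) :
    e ((X : R⟦X⟧) ^ k • u) n = if k ≤ n then e u (n - k) else 0 := by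
  rw [hsmul]
  simp [coeff_X_pow, ite_smul, Finset.sum_ite_eq']

theorem exists_X_pow_smul_eq_iff (hsmul : IsCoeffEquiv R e) {k : ℕ} {w : W} :
    (∃ u, (X : R⟦X⟧) ^ k • u = w) ↔ ∀ n < k, e w n = 0 := by
  constructor
  · rintro ⟨u, rfl⟩ n hn
    rw [coeff_X_pow_smul hsmul, if_neg (by omega)]
  · intro hw
    refine ⟨e.symm fun n => e w (n + k), e.injective (funext fun n => ?_)⟩
    rw [coeff_X_pow_smul hsmul]
    split_ifs with hkn
    · simp [Nat.sub_add_cancel hkn]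
    · exact (hw n (by omega)).symm

theorem X_smul_injective (hsmul : IsCoeffEquiv R e) :
    Function.Injective ((X : R⟦X⟧) • · : W → W) := by
  intro v w hvw
  refine e.injective (funext fun n => ?_)
  have := congrArg (fun x => e x (n + 1)) hvw
  rw [← pow_one (X : R⟦X⟧)] at this
  simpa only [coeff_X_pow_smul hsmul, if_pos (Nat.le_add_left 1 n), Nat.add_sub_cancel] using this

theorem eq_zero_of_forall_exists_X_pow_smul_eq (hsmul : IsCoeffEquiv R e) {w : W}
    (hw : ∀ k, ∃ u, (X : R⟦X⟧) ^ k • u = w) : w = 0 :=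
  e.injective (funext fun n => by
    simpa using (exists_X_pow_smul_eq_iff hsmul).mp (hw (n + 1)) n n.lt_succ_self)

theorem exists_forall_X_pow_smul_eq_sub (hsmul : IsCoeffEquiv R e) (x : ℕ → W)
    (hx : ∀ k j, k ≤ j → ∃ u, (X : R⟦X⟧) ^ k • u = x j - x k) :
    ∃ y, ∀ k, ∃ u, (X : R⟦X⟧) ^ k • u = y - x k := by
  refine ⟨e.symm fun n => e (x (n + 1)) n, fun k => (exists_X_pow_smul_eq_iff hsmul).mpr ?_⟩
  intro n hn
  have := (exists_X_pow_smul_eq_iff hsmul).mp (hx (n + 1) k hn) n n.lt_succ_self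
  simp only [map_sub, Pi.sub_apply, AddEquiv.apply_symm_apply] at this ⊢
  rw [← neg_sub, this, neg_zero]

end Coefficients

theorem smul_mem_of_forall_exists_X_pow_smul {R W : Type*} [CommRing R] [AddCommGroup W]
    [Module R⟦X⟧ W] {P : AddSubgroup W} (hC : ∀ c : R, ∀ w ∈ P, C c • w ∈ P)
    (hX : ∀ w ∈ P, (X : R⟦X⟧) • w ∈ P)
    (hclosed : ∀ w, (∀ k, ∃ n ∈ P, ∃ u, w - n = (X : R⟦X⟧) ^ k • u) → w ∈ P)
    (f : R⟦X⟧) {w : W} (hw : w ∈ P) : f • w ∈ P := by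
  have hpoly : ∀ p : Polynomial R, (p : R⟦X⟧) • w ∈ P := fun p => by
    induction p using Polynomial.induction_on with
    | C a => simpa using hC a w hw
    | add p q hp hq => simpa [add_smul] using P.add_mem hp hq
    | monomial n a ih =>
      rw [show ((Polynomial.C a * Polynomial.X ^ (n + 1) : Polynomial R) : R⟦X⟧) =
        X * ((Polynomial.C a * Polynomial.X ^ n : Polynomial R) : R⟦X⟧) by push_cast; ring,
        mul_smul]
      exact hX _ ih
  refine hclosed _ fun k => ⟨_, hpoly (trunc k f), ?_⟩
  obtain ⟨g, hg⟩ : X ^ k ∣ f - (trunc k f : R⟦X⟧) :=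
    X_pow_dvd_iff.mpr fun m hm => by simp [coeff_trunc, hm]
  exact ⟨g • w, by rw [← mul_smul, ← hg, sub_smul]⟩

theorem Submodule.isCompl_of_toAddSubmonoid_eq {R S M : Type*} [Semiring R] [Semiring S]
    [AddCommMonoid M] [Module R M] [Module S M] {p q : Submodule R M} {p' q' : Submodule S M}
    (hp : p'.toAddSubmonoid = p.toAddSubmonoid) (hq : q'.toAddSubmonoid = q.toAddSubmonoid)
    (h : IsCompl p q) : IsCompl p' q' := by
  rw [isCompl_iff, disjoint_iff, codisjoint_iff, ← toAddSubmonoid_inj, ← toAddSubmonoid_inj]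
  have hinf : (p' ⊓ q').toAddSubmonoid = (p ⊓ q).toAddSubmonoid :=
    AddSubmonoid.ext fun x => and_congr (SetLike.ext_iff.mp hp x) (SetLike.ext_iff.mp hq x)
  rw [hinf, sup_toAddSubmonoid, hp, hq, ← sup_toAddSubmonoid, h.inf_eq_bot, h.sup_eq_top]
  simp

theorem mem_range_toModuleEnd_pow {A S W : Type*} [Ring A] [Monoid S] [AddCommGroup W]
    [Module A W] [DistribMulAction S W] [SMulCommClass S A W] (s : S) (k : ℕ) (w : W) :
    w ∈ LinearMap.range (DistribMulAction.toModuleEnd A W s ^ k) ↔ ∃ u, s ^ k • u = w := by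
  rw [← map_pow]
  rfl

/-- Let `A` be a unital associative ℂ-algebra all of whose modules are
semisimple, acting (via `ρ`, extending the ℂ-structure) by ℂ[[ℏ]]-linear
endomorphisms on `W = W₀[[ℏ]]`. Every `A`-invariant, ℏ-saturated, ℏ-adically closed
ℂ[[ℏ]]-submodule `N` of `W` has an `A`-invariant, ℏ-saturated, ℏ-adically closed
complement `N″` with `W = N ⊕ N″`. -/
theorem statement11 (A : Type) [Ring A] [Algebra ℂ A]
    (hss : ∀ (M : Type) [AddCommGroup M] [Module A M], IsSemisimpleModule A M)
    (W₀ : Type) [AddCommGroup W₀] [Module ℂ W₀]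
    (W : Type) [AddCommGroup W] [Module (PowerSeries ℂ) W]
    (e : W ≃+ (ℕ → W₀))
    (hsmul : ∀ (f : PowerSeries ℂ) (w : W) (n : ℕ),
      e (f • w) n = ∑ k ∈ Finset.range (n + 1), PowerSeries.coeff (R := ℂ) k f • e w (n - k))
    (ρ : A →+* Module.End (PowerSeries ℂ) W)
    (hρC : ∀ (c : ℂ) (w : W), ρ (algebraMap ℂ A c) w = PowerSeries.C (R := ℂ) c • w)
    (N : Submodule (PowerSeries ℂ) W)
    (hNA : ∀ (a : A), ∀ w ∈ N, ρ a w ∈ N)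
    (hsat : ∀ w : W, (PowerSeries.X : PowerSeries ℂ) • w ∈ N → w ∈ N)
    (hclosed : ∀ w : W,
      (∀ k : ℕ, ∃ n ∈ N, ∃ u : W, w - n = (PowerSeries.X ^ k : PowerSeries ℂ) • u) → w ∈ N) :
    ∃ N'' : Submodule (PowerSeries ℂ) W,
      (∀ (a : A), ∀ w ∈ N'', ρ a w ∈ N'') ∧
      (∀ w : W, (PowerSeries.X : PowerSeries ℂ) • w ∈ N'' → w ∈ N'') ∧
      (∀ w : W, (∀ k : ℕ, ∃ n ∈ N'', ∃ u : W, w - n = (PowerSeries.X ^ k : PowerSeries ℂ) • u) → w ∈ N'') ∧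
      N ⊓ N'' = ⊥ ∧ N ⊔ N'' = ⊤ := by
  let _ : Module A W := Module.compHom W ρ
  have _ : SMulCommClass (PowerSeries ℂ) A W := ⟨fun f a w => ((ρ a).map_smul f w).symm⟩
  have _ := hss W
  let h := DistribMulAction.toModuleEnd A W (PowerSeries.X : PowerSeries ℂ)
  have mem_range (k : ℕ) (w : W) :
      w ∈ LinearMap.range (h ^ k) ↔ ∃ u, (PowerSeries.X ^ k : PowerSeries ℂ) • u = w :=
    mem_range_toModuleEnd_pow _ k w
  have isAdicClosed_iff (P : Submodule A W) : h.IsAdicClosed P ↔ ∀ w,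
      (∀ k, ∃ n ∈ P, ∃ u, w - n = (PowerSeries.X ^ k : PowerSeries ℂ) • u) → w ∈ P := by
    simp only [Module.End.IsAdicClosed, mem_range, eq_comm]
  let NA : Submodule A W := { N.toAddSubmonoid with smul_mem' := hNA }
  obtain ⟨N''A, hmap, hsat'', hclosed'', hcompl⟩ :=
    Module.End.exists_isCompl_isSaturated_isAdicClosed (h := h) (N := NA)
      (X_smul_injective hsmul)
      (fun w hw => eq_zero_of_forall_exists_X_pow_smul_eq hsmul fun k => (mem_range k w).mp (hw k))
      (fun x hx => by
        simpa only [mem_range] using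
          exists_forall_X_pow_smul_eq_sub hsmul x (by simpa only [mem_range] using hx))
      (by rintro _ ⟨w, hw, rfl⟩; exact N.smul_mem _ hw) hsat ((isAdicClosed_iff NA).mpr hclosed)
  let N'' : Submodule (PowerSeries ℂ) W :=
    { N''A.toAddSubmonoid with
      smul_mem' := fun f w hw => smul_mem_of_forall_exists_X_pow_smul (P := N''A.toAddSubgroup)
        (fun c w hw => by rw [← hρC]; exact N''A.smul_mem _ hw) (fun w hw => hmap ⟨w, hw, rfl⟩)
        ((isAdicClosed_iff N''A).mp hclosed'') f hw }
  have hcompl' : IsCompl N N'' :=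
    Submodule.isCompl_of_toAddSubmonoid_eq (p := NA) (q := N''A) rfl rfl hcompl
  exact ⟨N'', fun a w hw => N''A.smul_mem a hw, hsat'', (isAdicClosed_iff N''A).mp hclosed'',
    hcompl'.inf_eq_bot, hcompl'.sup_eq_top⟩
end
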